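/- arXiv:dg-ga/9502007 — 6 statements merged into one kernel-verified Lean document; each statement's English description precedes it below -/
import Mathlib

section
/- Let n, m ≥ 1 and Z, Z' ∈ ℂ^{n×m}, and let W = (1 + ZZ^*)^{-1}(1 + ZZ'^*)(1 + Z'Z'^*)^{-1}(1 + Z'Z^*). Let X = X(Z) and X' = X(Z') be the n-dimensional subspaces of ℂ^{n+m} spanned by the vectors z_i(Z), respectively z_i(Z'), and let P_X, P_{X'} : ℂ^{n+m} → ℂ^{n+m} denote the orthogonal projections onto X and X'. Then for every λ ∈ ℂ: λ is in the spectrum of the matrix W if and only if there exists a nonzero vector v ∈ X with P_X(P_{X'}(v)) = λ · v. -/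
open scoped Matrix InnerProductSpace

noncomputable section

/-- The vectors `z_i(Z) = e_i + ∑_j Z_{ij} e_{n+j}`. -/
def zVec (n m : ℕ) (Z : Matrix (Fin n) (Fin m) ℂ) (i : Fin n) :
    EuclideanSpace ℂ (Fin (n + m)) :=
  EuclideanSpace.single (Fin.castAdd m i) 1 +
    ∑ j : Fin m, Z i j • EuclideanSpace.single (Fin.natAdd n j) 1

/-- The `n`-plane `X(Z)` spanned by the `z_i(Z)`. -/
def planeOf (n m : ℕ) (Z : Matrix (Fin n) (Fin m) ℂ) :
    Submodule ℂ (EuclideanSpace ℂ (Fin (n + m))) :=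
  Submodule.span ℂ (Set.range (zVec n m Z))

/-- The matrix `W(Z,Z') = (1+ZZ^*)⁻¹(1+ZZ'^*)(1+Z'Z'^*)⁻¹(1+Z'Z^*)`. -/
def Wmat (n m : ℕ) (Z Z' : Matrix (Fin n) (Fin m) ℂ) : Matrix (Fin n) (Fin n) ℂ :=
  (1 + Z * Zᴴ)⁻¹ * (1 + Z * Z'ᴴ) * (1 + Z' * Z'ᴴ)⁻¹ * (1 + Z' * Zᴴ)

/-- The orthogonal projection of `ℂ^{n+m}` onto a subspace, as an endomorphism. -/
def projOn (n m : ℕ) (X : Submodule ℂ (EuclideanSpace ℂ (Fin (n + m))))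
    (v : EuclideanSpace ℂ (Fin (n + m))) : EuclideanSpace ℂ (Fin (n + m)) :=
  (X.orthogonalProjection v : EuclideanSpace ℂ (Fin (n + m)))

/-! ### Auxiliary definitions and lemmas -/

/-- The `(n+m) × n` matrix whose `i`-th column is `z_i(Z)`. -/
def Amat (n m : ℕ) (Z : Matrix (Fin n) (Fin m) ℂ) :
    Matrix (Fin (n + m)) (Fin n) ℂ :=
  Matrix.of fun k i =>
    Fin.addCases (fun i' => if i' = i then (1 : ℂ) else 0) (fun j => Z i j) k

lemma zVec_eq_col (n m : ℕ) (Z : Matrix (Fin n) (Fin m) ℂ) (i : Fin n) (k : Fin (n + m)) :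
    zVec n m Z i k = Amat n m Z k i := by
  induction k using Fin.addCases with
  | left i' =>
    simp only [zVec, Amat, Matrix.of_apply, Fin.addCases_left]
    have h1 : (EuclideanSpace.single (Fin.castAdd m i) (1:ℂ) : EuclideanSpace ℂ (Fin (n+m)))
        (Fin.castAdd m i') = if i' = i then 1 else 0 := by
      rw [EuclideanSpace.single_apply]
      congr 1
      simp [Fin.ext_iff, eq_comm]
    have h2 : ∀ j : Fin m,
        (Z i j • EuclideanSpace.single (Fin.natAdd n j) (1:ℂ) :
          EuclideanSpace ℂ (Fin (n+m))) (Fin.castAdd m i') = 0 := by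
      intro j
      have : (EuclideanSpace.single (Fin.natAdd n j) (1:ℂ) : EuclideanSpace ℂ (Fin (n+m)))
          (Fin.castAdd m i') = 0 := by
        rw [EuclideanSpace.single_apply, if_neg]
        simp only [Fin.ext_iff, Fin.coe_castAdd, Fin.coe_natAdd]
        omega
      rw [PiLp.smul_apply, smul_eq_mul]
      rw [this, mul_zero]
    show (EuclideanSpace.single (Fin.castAdd m i) (1:ℂ) : EuclideanSpace ℂ (Fin (n+m)))
        (Fin.castAdd m i') + (∑ j : Fin m, Z i j • EuclideanSpace.single (Fin.natAdd n j) (1:ℂ) :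
          EuclideanSpace ℂ (Fin (n+m))) (Fin.castAdd m i') = _
    rw [h1]
    have hsum : (∑ j : Fin m, Z i j • EuclideanSpace.single (Fin.natAdd n j) (1:ℂ) :
        EuclideanSpace ℂ (Fin (n+m))) (Fin.castAdd m i')
        = ∑ j : Fin m, (Z i j • EuclideanSpace.single (Fin.natAdd n j) (1:ℂ) :
            EuclideanSpace ℂ (Fin (n+m))) (Fin.castAdd m i') := by
      rw [WithLp.ofLp_sum, Finset.sum_apply]
    rw [hsum, Finset.sum_congr rfl (fun j _ => h2 j), Finset.sum_const_zero, add_zero]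
  | right j' =>
    simp only [zVec, Amat, Matrix.of_apply, Fin.addCases_right]
    have h1 : (EuclideanSpace.single (Fin.castAdd m i) (1:ℂ) : EuclideanSpace ℂ (Fin (n+m)))
        (Fin.natAdd n j') = 0 := by
      rw [EuclideanSpace.single_apply, if_neg]
      simp only [Fin.ext_iff, Fin.coe_castAdd, Fin.coe_natAdd]
      omega
    show (EuclideanSpace.single (Fin.castAdd m i) (1:ℂ) : EuclideanSpace ℂ (Fin (n+m)))
        (Fin.natAdd n j') + (∑ j : Fin m, Z i j • EuclideanSpace.single (Fin.natAdd n j) (1:ℂ) :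
          EuclideanSpace ℂ (Fin (n+m))) (Fin.natAdd n j') = Z i j'
    rw [h1, zero_add]
    have hsum : (∑ j : Fin m, Z i j • EuclideanSpace.single (Fin.natAdd n j) (1:ℂ) :
        EuclideanSpace ℂ (Fin (n+m))) (Fin.natAdd n j')
        = ∑ j : Fin m, (Z i j • EuclideanSpace.single (Fin.natAdd n j) (1:ℂ) :
            EuclideanSpace ℂ (Fin (n+m))) (Fin.natAdd n j') := by
          rw [WithLp.ofLp_sum, Finset.sum_apply]
    rw [hsum]
    have : ∀ j : Fin m, (Z i j • EuclideanSpace.single (Fin.natAdd n j) (1:ℂ) :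
        EuclideanSpace ℂ (Fin (n+m))) (Fin.natAdd n j')
        = Z i j * (if j' = j then 1 else 0) := by
      intro j
      rw [PiLp.smul_apply, smul_eq_mul]
      rw [EuclideanSpace.single_apply]
      congr 2
      simp only [Fin.ext_iff, Fin.coe_natAdd, eq_iff_iff]
      omega
    rw [Finset.sum_congr rfl (fun j _ => this j)]
    simp

/-- The Gram-type identity: `A(Z)ᴴ A(Z') = (1 + Z' Zᴴ)ᵀ`. -/
lemma gram_eq (n m : ℕ) (Z Z' : Matrix (Fin n) (Fin m) ℂ) :
    (Amat n m Z)ᴴ * Amat n m Z' = (1 + Z' * Zᴴ)ᵀ := by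
  ext i k
  simp only [Matrix.mul_apply, Matrix.conjTranspose_apply, Matrix.transpose_apply,
    Matrix.add_apply, Matrix.one_apply, Matrix.mul_apply]
  rw [Fin.sum_univ_add]
  simp only [Amat, Matrix.of_apply, Fin.addCases_left, Fin.addCases_right]
  have h1 : (∑ i' : Fin n, star (if i' = i then (1:ℂ) else 0) * (if i' = k then 1 else 0))
      = if k = i then 1 else 0 := by
    rw [Finset.sum_eq_single k]
    · by_cases h : k = i <;> simp [h]
    · intro b _ hb
      simp [hb]
    · simp
  rw [h1]
  congr 1
  apply Finset.sum_congr rfl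
  intro j _
  simp only [Matrix.conjTranspose_apply, RCLike.star_def]
  ring

lemma Amat_mulVec_castAdd (n m : ℕ) (Z : Matrix (Fin n) (Fin m) ℂ) (c : Fin n → ℂ)
    (i : Fin n) : (Amat n m Z *ᵥ c) (Fin.castAdd m i) = c i := by
  simp only [Matrix.mulVec, dotProduct, Amat, Matrix.of_apply, Fin.addCases_left]
  rw [Finset.sum_eq_single i] <;> simp +contextual [eq_comm]

lemma Amat_mulVec_injective (n m : ℕ) (Z : Matrix (Fin n) (Fin m) ℂ) :
    Function.Injective (Matrix.mulVec (Amat n m Z)) := by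
  intro c d h
  funext i
  have := congrFun h (Fin.castAdd m i)
  rwa [Amat_mulVec_castAdd, Amat_mulVec_castAdd] at this

open scoped ComplexOrder in
lemma det_gram_ne_zero (n m : ℕ) (Z : Matrix (Fin n) (Fin m) ℂ) :
    ((Amat n m Z)ᴴ * Amat n m Z).det ≠ 0 := by
  intro h
  obtain ⟨c, hc, hc0⟩ := (Matrix.exists_mulVec_eq_zero_iff).2 h
  apply hc
  have h1 : dotProduct (star c) (((Amat n m Z)ᴴ * Amat n m Z) *ᵥ c) = 0 := by
    rw [hc0, dotProduct_zero]
  rw [← Matrix.mulVec_mulVec, Matrix.dotProduct_mulVec, ← Matrix.star_mulVec] at h1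
  have h2 : Amat n m Z *ᵥ c = 0 := dotProduct_star_self_eq_zero.1 h1
  have h3 : Amat n m Z *ᵥ c = Amat n m Z *ᵥ 0 := by rw [h2, Matrix.mulVec_zero]
  exact Amat_mulVec_injective n m Z h3

lemma mem_planeOf_iff (n m : ℕ) (Z : Matrix (Fin n) (Fin m) ℂ)
    (v : EuclideanSpace ℂ (Fin (n + m))) :
    v ∈ planeOf n m Z ↔ ∃ c : Fin n → ℂ, (Amat n m Z *ᵥ c) = (v : Fin (n+m) → ℂ) := by
  rw [planeOf, Finsupp.mem_span_range_iff_exists_finsupp]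
  constructor
  · rintro ⟨c, hc⟩
    refine ⟨fun i => c i, ?_⟩
    funext k
    have := congrFun (congrArg (fun (w : EuclideanSpace ℂ (Fin (n+m))) => (w : Fin (n+m) → ℂ)) hc) k
    simp only at this
    rw [← this]
    have hsum : ((Finsupp.sum c fun i a => a • zVec n m Z i : EuclideanSpace ℂ (Fin (n+m))) :
        Fin (n+m) → ℂ) k = Finsupp.sum c fun i a => a * zVec n m Z i k := by
      classical
      rw [Finsupp.sum, Finsupp.sum]
      rw [WithLp.ofLp_sum, Finset.sum_apply]
      rfl
    rw [hsum]
    rw [Finsupp.sum_fintype _ _ (by intro i; exact zero_mul _)]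
    simp only [Matrix.mulVec, dotProduct]
    apply Finset.sum_congr rfl
    intro i _
    rw [zVec_eq_col]
    ring
  · rintro ⟨c, hc⟩
    classical
    refine ⟨Finsupp.equivFunOnFinite.symm c, ?_⟩
    have : (Finsupp.sum (Finsupp.equivFunOnFinite.symm c)
        fun i a => a • zVec n m Z i) = ∑ i : Fin n, c i • zVec n m Z i := by
      rw [Finsupp.sum_fintype _ _ (by intro i; exact zero_smul _ _)]
      rfl
    rw [this]
    ext k
    have hsum : ((∑ i : Fin n, c i • zVec n m Z i : EuclideanSpace ℂ (Fin (n+m))) :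
        Fin (n+m) → ℂ) k = ∑ i : Fin n, c i * zVec n m Z i k := by
        rw [WithLp.ofLp_sum, Finset.sum_apply]
        rfl
    show _ = v k
    rw [hsum, ← hc]
    simp only [Matrix.mulVec, dotProduct]
    apply Finset.sum_congr rfl
    intro i _
    rw [zVec_eq_col]
    ring

lemma inner_zVec (n m : ℕ) (Z : Matrix (Fin n) (Fin m) ℂ)
    (x : EuclideanSpace ℂ (Fin (n + m))) (i : Fin n) :
    ⟪zVec n m Z i, x⟫_ℂ = ((Amat n m Z)ᴴ *ᵥ (x : Fin (n+m) → ℂ)) i := by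
  rw [PiLp.inner_apply]
  simp only [Matrix.mulVec, dotProduct, Matrix.conjTranspose_apply, RCLike.inner_apply]
  apply Finset.sum_congr rfl
  intro k _
  rw [zVec_eq_col]
  exact mul_comm _ _

/-- The orthogonal projection onto `X(Z)` in matrix form. -/
lemma projOn_eq (n m : ℕ) (Z : Matrix (Fin n) (Fin m) ℂ)
    (v : EuclideanSpace ℂ (Fin (n + m))) :
    (projOn n m (planeOf n m Z) v : Fin (n+m) → ℂ)
      = Amat n m Z *ᵥ (((Amat n m Z)ᴴ * Amat n m Z)⁻¹ *ᵥ ((Amat n m Z)ᴴ *ᵥ v)) := by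
  set A := Amat n m Z with hA
  set u : EuclideanSpace ℂ (Fin (n+m)) := WithLp.toLp 2 (A *ᵥ ((Aᴴ * A)⁻¹ *ᵥ (Aᴴ *ᵥ v)))
    with hu
  have hmem : u ∈ planeOf n m Z := (mem_planeOf_iff n m Z u).2 ⟨_, rfl⟩
  have hker : Aᴴ *ᵥ ((v : Fin (n+m) → ℂ) - u) = 0 := by
    rw [Matrix.mulVec_sub]
    have : Aᴴ *ᵥ (u : Fin (n+m) → ℂ) = Aᴴ *ᵥ v := by
      rw [hu, WithLp.ofLp_toLp]
      rw [Matrix.mulVec_mulVec, Matrix.mulVec_mulVec,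
        Matrix.mul_nonsing_inv _ (isUnit_iff_ne_zero.mpr (det_gram_ne_zero n m Z)),
        Matrix.one_mulVec]
    rw [this, sub_self]
  have horth : ∀ w ∈ planeOf n m Z, ⟪v - u, w⟫_ℂ = 0 := by
    intro w hw
    induction hw using Submodule.span_induction with
    | mem w hw =>
      obtain ⟨i, rfl⟩ := hw
      rw [← inner_conj_symm, inner_zVec]
      have : ((Amat n m Z)ᴴ *ᵥ ((v - u : EuclideanSpace ℂ (Fin (n+m))) : Fin (n+m) → ℂ)) i
          = 0 := by
        have : ((v - u : EuclideanSpace ℂ (Fin (n+m))) : Fin (n+m) → ℂ)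
            = (v : Fin (n+m) → ℂ) - u := rfl
        rw [this, hker]
        rfl
      rw [this, map_zero]
    | zero => exact inner_zero_right _
    | add w₁ w₂ _ _ h₁ h₂ => rw [inner_add_right, h₁, h₂, add_zero]
    | smul a w _ h => rw [inner_smul_right, h, mul_zero]
  exact congrArg WithLp.ofLp (Submodule.eq_starProjection_of_mem_of_inner_eq_zero hmem horth)

lemma det_smul_one_sub_eq (n : ℕ) (lam : ℂ) (G P Q : Matrix (Fin n) (Fin n) ℂ)
    (hG : G.det ≠ 0) (hPQ : P = G * Q * G⁻¹) :
    (lam • 1 - P).det = (lam • 1 - Q).det := by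
  have h1 : lam • (1 : Matrix (Fin n) (Fin n) ℂ) - P = G * (lam • 1 - Q) * G⁻¹ := by
    rw [hPQ, Matrix.mul_sub, Matrix.sub_mul]
    congr 1
    rw [Matrix.mul_smul, Matrix.mul_one, Matrix.smul_mul,
      Matrix.mul_nonsing_inv _ (isUnit_iff_ne_zero.mpr hG)]
  rw [h1, Matrix.det_mul, Matrix.det_mul, Matrix.det_nonsing_inv, Ring.inverse_eq_inv']
  field_simp [hG]

set_option maxHeartbeats 1000000 in
/-- Lemma 1: `λ` is an eigenvalue of `W(Z,Z')` iff there is a nonzero `v ∈ X(Z)` with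
`P_{X(Z)}(P_{X(Z')} v) = λ v`. -/
theorem spectrum_Wmat_iff_eigenvector_of_projections
    (n m : ℕ) (hn : 1 ≤ n) (hm : 1 ≤ m)
    (Z Z' : Matrix (Fin n) (Fin m) ℂ) (lam : ℂ) :
    lam ∈ spectrum ℂ (Wmat n m Z Z') ↔
      ∃ v : EuclideanSpace ℂ (Fin (n + m)), v ∈ planeOf n m Z ∧ v ≠ 0 ∧
        projOn n m (planeOf n m Z) (projOn n m (planeOf n m Z') v) = lam • v := by
  classical
  set A := Amat n m Z with hA
  set A' := Amat n m Z' with hA'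
  set G : Matrix (Fin n) (Fin n) ℂ := 1 + Z * Zᴴ with hG
  set G' : Matrix (Fin n) (Fin n) ℂ := 1 + Z' * Z'ᴴ with hG'
  set B : Matrix (Fin n) (Fin n) ℂ := 1 + Z * Z'ᴴ with hB
  set B' : Matrix (Fin n) (Fin n) ℂ := 1 + Z' * Zᴴ with hB'
  set N : Matrix (Fin n) (Fin n) ℂ := (Aᴴ * A)⁻¹ * (Aᴴ * A') * (A'ᴴ * A')⁻¹ * (A'ᴴ * A)
    with hN
  -- Gram identities
  have gAA : Aᴴ * A = Gᵀ := by rw [hA, gram_eq]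
  have gAA' : Aᴴ * A' = B'ᵀ := by rw [hA, hA', gram_eq]
  have gA'A' : A'ᴴ * A' = G'ᵀ := by rw [hA', gram_eq]
  have gA'A : A'ᴴ * A = Bᵀ := by rw [hA', hA, gram_eq]
  have hdetG : G.det ≠ 0 := by
    have := det_gram_ne_zero n m Z
    rwa [← hA, gAA, Matrix.det_transpose] at this
  have hdetG' : G'.det ≠ 0 := by
    have := det_gram_ne_zero n m Z'
    rwa [← hA', gA'A', Matrix.det_transpose] at this
  -- N = (B * G'⁻¹ * B' * G⁻¹)ᵀ
  have hNT : N = (B * G'⁻¹ * B' * G⁻¹)ᵀ := by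
    rw [hN, gAA, gAA', gA'A', gA'A, ← Matrix.transpose_nonsing_inv, ← Matrix.transpose_nonsing_inv]
    rw [← Matrix.transpose_mul, ← Matrix.transpose_mul, ← Matrix.transpose_mul]
    congr 1
    rw [Matrix.mul_assoc, Matrix.mul_assoc]
  -- spectral condition via determinants
  have hspec : lam ∈ spectrum ℂ (Wmat n m Z Z') ↔ (lam • 1 - Wmat n m Z Z').det = 0 := by
    rw [spectrum.mem_iff]
    have halg : algebraMap ℂ (Matrix (Fin n) (Fin n) ℂ) lam = lam • 1 := by
      rw [Algebra.algebraMap_eq_smul_one]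
    rw [halg, Matrix.isUnit_iff_isUnit_det, isUnit_iff_ne_zero, not_not]
  have hdetEq : (lam • 1 - Wmat n m Z Z').det = (lam • (1 : Matrix (Fin n) (Fin n) ℂ) - N).det := by
    have hW : Wmat n m Z Z' = G⁻¹ * B * G'⁻¹ * B' := rfl
    have hsim : B * G'⁻¹ * B' * G⁻¹ = G * (Wmat n m Z Z') * G⁻¹ := by
      rw [hW, ← Matrix.mul_assoc, ← Matrix.mul_assoc, ← Matrix.mul_assoc,
        Matrix.mul_nonsing_inv _ (isUnit_iff_ne_zero.mpr hdetG), Matrix.one_mul]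
    have h1 : (lam • (1 : Matrix (Fin n) (Fin n) ℂ) - N).det
        = (lam • (1 : Matrix (Fin n) (Fin n) ℂ) - B * G'⁻¹ * B' * G⁻¹).det := by
      rw [hNT]
      have : lam • (1 : Matrix (Fin n) (Fin n) ℂ) - (B * G'⁻¹ * B' * G⁻¹)ᵀ
          = (lam • (1 : Matrix (Fin n) (Fin n) ℂ) - B * G'⁻¹ * B' * G⁻¹)ᵀ := by
        rw [Matrix.transpose_sub, Matrix.transpose_smul, Matrix.transpose_one]
      rw [this, Matrix.det_transpose]
    rw [h1]
    exact (det_smul_one_sub_eq n lam G _ _ hdetG hsim).symm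
  -- eigenvector condition for N
  have heig : (lam • (1 : Matrix (Fin n) (Fin n) ℂ) - N).det = 0
      ↔ ∃ c : Fin n → ℂ, c ≠ 0 ∧ N *ᵥ c = lam • c := by
    rw [← Matrix.exists_mulVec_eq_zero_iff]
    constructor
    · rintro ⟨c, hc, hc0⟩
      refine ⟨c, hc, ?_⟩
      rw [Matrix.sub_mulVec, Matrix.smul_mulVec, Matrix.one_mulVec, sub_eq_zero] at hc0
      exact hc0.symm
    · rintro ⟨c, hc, hc0⟩
      refine ⟨c, hc, ?_⟩
      rw [Matrix.sub_mulVec, Matrix.smul_mulVec, Matrix.one_mulVec, hc0, sub_self]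
  rw [hspec, hdetEq, heig]
  -- translate eigenvectors of N into eigenvectors of the projections
  constructor
  · rintro ⟨c, hc, hc0⟩
    refine ⟨WithLp.toLp 2 (A *ᵥ c), (mem_planeOf_iff n m Z _).2 ⟨c, rfl⟩, ?_, ?_⟩
    · intro h0
      apply hc
      have : A *ᵥ c = A *ᵥ 0 := by
        rw [Matrix.mulVec_zero]
        exact congrArg (fun (w : EuclideanSpace ℂ (Fin (n+m))) => (w : Fin (n+m) → ℂ)) h0
      exact Amat_mulVec_injective n m Z this
    · have key : (projOn n m (planeOf n m Z) (projOn n m (planeOf n m Z')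
          (WithLp.toLp 2 (A *ᵥ c))) : Fin (n+m) → ℂ)
          = A *ᵥ (N *ᵥ c) := by
        rw [projOn_eq, projOn_eq, ← hA, ← hA']
        simp only [Matrix.mulVec_mulVec, WithLp.ofLp_toLp]
        rw [hN]
        congr 1
        simp only [Matrix.mul_assoc]
      have key2 : A *ᵥ (N *ᵥ c) = lam • (A *ᵥ c) := by
        rw [hc0, Matrix.mulVec_smul]
      exact WithLp.ofLp_injective 2 (key.trans key2)
  · rintro ⟨v, hv, hv0, hproj⟩
    obtain ⟨c, hc⟩ := (mem_planeOf_iff n m Z v).1 hv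
    refine ⟨c, ?_, ?_⟩
    · intro h0
      apply hv0
      have : (v : Fin (n+m) → ℂ) = 0 := by rw [← hc, h0, Matrix.mulVec_zero]
      exact WithLp.ofLp_injective 2 this
    · have key : A *ᵥ (N *ᵥ c) = A *ᵥ (lam • c) := by
        have lhs : (projOn n m (planeOf n m Z) (projOn n m (planeOf n m Z') v) :
            Fin (n+m) → ℂ) = A *ᵥ (N *ᵥ c) := by
          rw [projOn_eq, projOn_eq, ← hA, ← hA']
          rw [← hc, ← hA]
          simp only [Matrix.mulVec_mulVec]
          rw [hN]
          try congr 1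
          all_goals simp only [Matrix.mul_assoc]
        have rhs : ((lam • v : EuclideanSpace ℂ (Fin (n+m))) : Fin (n+m) → ℂ)
            = A *ᵥ (lam • c) := by
          rw [Matrix.mulVec_smul, hc, WithLp.ofLp_smul]
        rw [← lhs, ← rhs, hproj]
      have := Amat_mulVec_injective n m Z key
      exact this
end
end

section
/- Let n, m ≥ 1 and Z, Z' ∈ ℂ^{n×m}, and let W = (1 + ZZ^*)^{-1}(1 + ZZ'^*)(1 + Z'Z'^*)^{-1}(1 + Z'Z^*). Then det(1 + ZZ^*) and det(1 + Z'Z'^*) are positive real numbers, det W is a real number with 0 ≤ det W ≤ 1, and |det(1 + ZZ'^*)|² = det(1 + ZZ^*) · det(1 + Z'Z'^*) · det W. -/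
open scoped Matrix

noncomputable section

open Matrix in
open scoped ComplexOrder in
/-- `det (1 + P)` for `P` positive semidefinite is a real number `≥ 1`. -/
private lemma aux_det_one_add {n : ℕ} {P : Matrix (Fin n) (Fin n) ℂ} (hP : P.PosSemidef) :
    ∃ r : ℝ, 1 ≤ r ∧ (1 + P).det = (r : ℂ) := by
  set U : Matrix (Fin n) (Fin n) ℂ := (hP.1.eigenvectorUnitary : Matrix (Fin n) (Fin n) ℂ)
  have hU : U * star U = 1 := (Matrix.mem_unitaryGroup_iff).mp hP.1.eigenvectorUnitary.2
  have hspec := hP.1.spectral_theorem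
  refine ⟨∏ i, (1 + hP.1.eigenvalues i), ?_, ?_⟩
  · calc (1:ℝ) = ∏ _i : Fin n, 1 := by simp
      _ ≤ ∏ i, (1 + hP.1.eigenvalues i) :=
        Finset.prod_le_prod (fun i _ => by norm_num)
          (fun i _ => by linarith [hP.eigenvalues_nonneg i])
  · have h1 : (1 : Matrix (Fin n) (Fin n) ℂ) + P
        = U * (1 + Matrix.diagonal (RCLike.ofReal ∘ hP.1.eigenvalues)) * star U := by
      rw [Matrix.mul_add, Matrix.add_mul, Matrix.mul_one, hU]
      exact congrArg (1 + ·) hspec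
    rw [h1, Matrix.det_mul, Matrix.det_mul, mul_comm, ← mul_assoc, mul_comm (Matrix.det (star U)),
      ← Matrix.det_mul, hU, Matrix.det_one, one_mul]
    have h2 : (1 : Matrix (Fin n) (Fin n) ℂ) + Matrix.diagonal (RCLike.ofReal ∘ hP.1.eigenvalues)
        = Matrix.diagonal (fun i => (1 : ℂ) + (hP.1.eigenvalues i : ℂ)) := by
      rw [← Matrix.diagonal_one, Matrix.diagonal_add]
      rfl
    rw [h2, Matrix.det_diagonal]
    push_cast
    rfl

open Matrix in
open scoped ComplexOrder in
open scoped MatrixOrder in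
/-- Determinant monotonicity: for `X` PSD with nonzero determinant and `S` PSD,
`det (X + S) = det X * r` for some real `r ≥ 1`. -/
private lemma aux_det_add {n : ℕ} {X S : Matrix (Fin n) (Fin n) ℂ}
    (hX : X.PosSemidef) (hS : S.PosSemidef) (hdet : X.det ≠ 0) :
    ∃ r : ℝ, 1 ≤ r ∧ (X + S).det = X.det * (r : ℂ) := by
  set R := CFC.sqrt X with hRdef
  have hRps : R.PosSemidef := (CFC.sqrt_nonneg X).posSemidef
  have hRR : R * R = X := CFC.sqrt_mul_sqrt_self X hX.nonneg
  have hRdet : R.det ≠ 0 := by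
    intro h
    apply hdet
    rw [← hRR, Matrix.det_mul, h, mul_zero]
  have hRinv : R * R⁻¹ = 1 := Matrix.mul_nonsing_inv R hRdet.isUnit
  have hRinv' : R⁻¹ * R = 1 := Matrix.nonsing_inv_mul R hRdet.isUnit
  have hRH : (R⁻¹)ᴴ = R⁻¹ := by
    rw [Matrix.conjTranspose_nonsing_inv, hRps.1.eq]
  obtain ⟨r, hr1, hr2⟩ := aux_det_one_add (hS.mul_mul_conjTranspose_same R⁻¹)
  refine ⟨r, hr1, ?_⟩
  have key : X + S = R * (1 + R⁻¹ * S * (R⁻¹)ᴴ) * R := by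
    rw [Matrix.mul_add, Matrix.mul_one, Matrix.add_mul, hRR, hRH]
    congr 1
    symm
    calc R * (R⁻¹ * S * R⁻¹) * R = (R * R⁻¹) * S * (R⁻¹ * R) := by
          simp only [Matrix.mul_assoc]
      _ = S := by rw [hRinv, hRinv', Matrix.one_mul, Matrix.mul_one]
  rw [key, Matrix.det_mul, Matrix.det_mul, hr2, mul_comm, ← mul_assoc, ← Matrix.det_mul, hRR,
    mul_comm]

/-- Lemma 2 (determinant form): `det(1+ZZ^*)` and `det(1+Z'Z'^*)` are positive reals,
`det W` is a real number in `[0,1]`, and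
`|det(1+ZZ'^*)|² = det(1+ZZ^*) ⬝ det(1+Z'Z'^*) ⬝ det W`. -/
theorem abs_det_sq_eq_dets_mul_det_Wmat
    (n m : ℕ) (hn : 1 ≤ n) (hm : 1 ≤ m)
    (Z Z' : Matrix (Fin n) (Fin m) ℂ) :
    (0 < ((1 + Z * Zᴴ).det).re ∧ ((1 + Z * Zᴴ).det).im = 0) ∧
    (0 < ((1 + Z' * Z'ᴴ).det).re ∧ ((1 + Z' * Z'ᴴ).det).im = 0) ∧
    (((Wmat n m Z Z').det).im = 0 ∧ 0 ≤ ((Wmat n m Z Z').det).re ∧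
      ((Wmat n m Z Z').det).re ≤ 1) ∧
    ‖(1 + Z * Z'ᴴ).det‖ ^ 2 =
      ((1 + Z * Zᴴ).det).re * ((1 + Z' * Z'ᴴ).det).re * ((Wmat n m Z Z').det).re := by
  open Matrix in
  open scoped ComplexOrder in
  -- notation
  set A : Matrix (Fin n) (Fin n) ℂ := 1 + Z * Zᴴ with hAdef
  set B : Matrix (Fin n) (Fin n) ℂ := 1 + Z' * Z'ᴴ with hBdef
  set C : Matrix (Fin n) (Fin n) ℂ := 1 + Z * Z'ᴴ with hCdef
  have hCH : Cᴴ = 1 + Z' * Zᴴ := by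
    simp [hCdef, Matrix.conjTranspose_add, Matrix.conjTranspose_mul]
  -- positive definiteness
  have hA : A.PosDef := Matrix.PosDef.add_posSemidef Matrix.PosDef.one
    (Matrix.posSemidef_self_mul_conjTranspose Z)
  have hB : B.PosDef := Matrix.PosDef.add_posSemidef Matrix.PosDef.one
    (Matrix.posSemidef_self_mul_conjTranspose Z')
  obtain ⟨ar, har, hAar⟩ : ∃ ar : ℝ, 0 < ar ∧ A.det = (ar : ℂ) := by
    have h := hA.det_pos
    rw [Complex.lt_def] at h
    exact ⟨A.det.re, by simpa using h.1, by
      apply Complex.ext <;> simp [← h.2]⟩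
  obtain ⟨br, hbr, hBbr⟩ : ∃ br : ℝ, 0 < br ∧ B.det = (br : ℂ) := by
    have h := hB.det_pos
    rw [Complex.lt_def] at h
    exact ⟨B.det.re, by simpa using h.1, by
      apply Complex.ext <;> simp [← h.2]⟩
  set c : ℂ := C.det with hcdef
  set nc : ℝ := Complex.normSq c with hncdef
  have hnc0' : 0 ≤ nc := hncdef ▸ Complex.normSq_nonneg c
  have hcc : (starRingEnd ℂ) c * c = (nc : ℂ) := by
    rw [mul_comm, Complex.mul_conj]
  -- the Gram block matrix is PSD
  have hblock : (Matrix.fromBlocks A C Cᴴ B).PosSemidef := by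
    set N : Matrix (Fin n ⊕ Fin n) (Fin n ⊕ Fin m) ℂ :=
      Matrix.fromBlocks 1 Z 1 Z' with hNdef
    have h := Matrix.posSemidef_self_mul_conjTranspose N
    have hNN : N * Nᴴ = Matrix.fromBlocks A C Cᴴ B := by
      rw [hCH]
      simp [hNdef, Matrix.fromBlocks_conjTranspose, Matrix.fromBlocks_multiply, hAdef, hBdef,
        hCdef]
    rwa [hNN] at h
  haveI : Invertible A := A.invertibleOfIsUnitDet hA.det_pos.ne'.isUnit
  have hSchur : (B - Cᴴ * A⁻¹ * C).PosSemidef :=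
    (Matrix.PosDef.fromBlocks₁₁ C B hA).mp hblock
  have hXps : (Cᴴ * A⁻¹ * C).PosSemidef :=
    hA.inv.posSemidef.conjTranspose_mul_mul_same C
  have hAdet0 : A.det ≠ 0 := hA.det_pos.ne'
  have hBdet0 : B.det ≠ 0 := hB.det_pos.ne'
  -- determinant of X
  have hXdet : (Cᴴ * A⁻¹ * C).det = (starRingEnd ℂ) c * (A.det)⁻¹ * c := by
    rw [Matrix.det_mul, Matrix.det_mul, Matrix.det_conjTranspose, Matrix.det_nonsing_inv,
      Ring.inverse_eq_inv]
    rfl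
  -- key inequality
  have hkey : nc ≤ ar * br := by
    by_cases hc : c = 0
    · rw [hncdef, hc]
      simp
      positivity
    · have hXdet0 : (Cᴴ * A⁻¹ * C).det ≠ 0 := by
        rw [hXdet, hAar]
        simp only [ne_eq, mul_eq_zero, inv_eq_zero, Complex.ofReal_eq_zero, map_eq_zero]
        push_neg
        exact ⟨⟨hc, har.ne'⟩, hc⟩
      obtain ⟨r, hr1, hr2⟩ := aux_det_add hXps hSchur hXdet0
      rw [add_sub_cancel] at hr2
      -- B.det = X.det * r
      have h3 : (br : ℂ) = (nc : ℂ) * ((ar : ℂ))⁻¹ * (r : ℂ) := by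
        rw [← hBbr, hr2, hXdet, hAar, ← hcc]
        ring
      have hbrval : br = nc * ar⁻¹ * r := by exact_mod_cast h3
      have hnc0 : 0 < nc := by
        rw [hncdef]
        exact Complex.normSq_pos.mpr hc
      have hinv : ar * ar⁻¹ = 1 := mul_inv_cancel₀ har.ne'
      calc nc = nc * 1 := by ring
        _ ≤ nc * r := by nlinarith
        _ = ar * (nc * ar⁻¹ * r) := by
            field_simp
        _ = ar * br := by rw [hbrval]
  -- determinant of W
  have hW : (Wmat n m Z Z').det = ((nc / (ar * br) : ℝ) : ℂ) := by
    have : Wmat n m Z Z' = A⁻¹ * C * B⁻¹ * Cᴴ := by rw [hCH]; rfl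
    rw [this, Matrix.det_mul, Matrix.det_mul, Matrix.det_mul, Matrix.det_conjTranspose,
      Matrix.det_nonsing_inv, Matrix.det_nonsing_inv, Ring.inverse_eq_inv, Ring.inverse_eq_inv,
      hAar, hBbr, Complex.star_def]
    have har' : (ar : ℂ) ≠ 0 := by exact_mod_cast har.ne'
    have hbr' : (br : ℂ) ≠ 0 := by exact_mod_cast hbr.ne'
    push_cast
    rw [← hcc]
    field_simp
    ring
  refine ⟨⟨by simp [hAar, har], by simp [hAar]⟩, ⟨by simp [hBbr, hbr], by simp [hBbr]⟩,
    ⟨by rw [hW]; exact Complex.ofReal_im _, by rw [hW, Complex.ofReal_re]; exact div_nonneg hnc0' (by positivity), ?_⟩, ?_⟩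
  · rw [hW]
    simp only [Complex.ofReal_re]
    rw [div_le_one (by positivity)]
    exact hkey
  · rw [hAar, hBbr, hW]
    simp only [Complex.ofReal_re]
    rw [Complex.sq_norm, ← hncdef]
    field_simp
end
end

section
/- Let n, m ≥ 1 and Z, Z' ∈ ℂ^{n×m}, and let X(Z), X(Z') be the n-dimensional subspaces of ℂ^{n+m} spanned by the vectors z_i(Z), respectively z_i(Z'). Then det(1 + ZZ'^*) = 0 if and only if X(Z) ∩ X(Z')^⊥ ≠ {0}, where X(Z')^⊥ is the orthogonal complement of X(Z') in ℂ^{n+m}. -/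
open scoped Matrix

noncomputable section

lemma euclid_sum_apply {N ι : Type*} [Fintype N] [Fintype ι]
    (f : N → EuclideanSpace ℂ ι) (a : ι) :
    (∑ i, f i) a = ∑ i, f i a := by rw [WithLp.ofLp_sum, Finset.sum_apply]

lemma euclid_add_apply {ι : Type*} [Fintype ι] (f g : EuclideanSpace ℂ ι) (a : ι) :
    (f + g) a = f a + g a := rfl

lemma euclid_smul_apply {ι : Type*} [Fintype ι] (c : ℂ) (f : EuclideanSpace ℂ ι) (a : ι) :
    (c • f) a = c * f a := rfl

lemma zVec_apply_castAdd (n m : ℕ) (Z : Matrix (Fin n) (Fin m) ℂ) (k i : Fin n) :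
    zVec n m Z k (Fin.castAdd m i) = if i = k then 1 else 0 := by
  have h : ∀ j : Fin m, (Fin.castAdd m i : Fin (n+m)) ≠ Fin.natAdd n j := by
    intro j h
    have := congrArg Fin.val h
    simp [Fin.castAdd, Fin.natAdd] at this
    omega
  rw [zVec, euclid_add_apply, euclid_sum_apply]
  simp only [euclid_smul_apply, EuclideanSpace.single_apply]
  simp [h, Fin.castAdd_inj, eq_comm]

lemma zVec_apply_natAdd (n m : ℕ) (Z : Matrix (Fin n) (Fin m) ℂ) (k : Fin n) (j : Fin m) :
    zVec n m Z k (Fin.natAdd n j) = Z k j := by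
  have h : (Fin.natAdd n j : Fin (n+m)) ≠ Fin.castAdd m k := by
    intro h
    have := congrArg Fin.val h
    simp [Fin.castAdd, Fin.natAdd] at this
    omega
  have h2 : ∀ x : Fin m, (Fin.natAdd n j = Fin.natAdd n x) = (j = x) := by
    intro x
    simp [Fin.ext_iff]
  rw [zVec, euclid_add_apply, euclid_sum_apply]
  simp only [euclid_smul_apply, EuclideanSpace.single_apply]
  simp [h, h2]

lemma inner_zVec_zVec (n m : ℕ) (Z Z' : Matrix (Fin n) (Fin m) ℂ) (i k : Fin n) :
    (inner ℂ (zVec n m Z' i) (zVec n m Z k) : ℂ)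
      = (1 + Z * Z'ᴴ : Matrix (Fin n) (Fin n) ℂ) k i := by
  conv_lhs => rw [zVec]
  rw [inner_add_left, sum_inner]
  simp only [inner_smul_left, EuclideanSpace.inner_single_left, map_one, one_mul,
    zVec_apply_castAdd, zVec_apply_natAdd]
  simp [Matrix.add_apply, Matrix.mul_apply, Matrix.one_apply, Matrix.conjTranspose_apply,
    mul_comm, eq_comm]

/-- The coherent-state overlap `det(1+ZZ'^*)` vanishes iff `X(Z)` meets the orthogonal
complement of `X(Z')` nontrivially (i.e. `X(Z)` lies in the polar divisor of `X(Z')`). -/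
theorem det_overlap_eq_zero_iff_meets_orthogonal_complement
    (n m : ℕ) (hn : 1 ≤ n) (hm : 1 ≤ m)
    (Z Z' : Matrix (Fin n) (Fin m) ℂ) :
    (1 + Z * Z'ᴴ).det = 0 ↔ planeOf n m Z ⊓ (planeOf n m Z')ᗮ ≠ ⊥ := by
  set M : Matrix (Fin n) (Fin n) ℂ := 1 + Z * Z'ᴴ with hM
  have hmv : ∀ (c : Fin n → ℂ), Mᵀ *ᵥ c = 0 ↔ ∀ i, ∑ k, c k * M k i = 0 := by
    intro c
    constructor
    · intro h i
      have := congrFun h i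
      simpa [Matrix.mulVec, dotProduct, Matrix.transpose_apply, mul_comm] using this
    · intro h
      funext i
      simpa [Matrix.mulVec, dotProduct, Matrix.transpose_apply, mul_comm] using h i
  rw [← Matrix.det_transpose, ← Matrix.exists_mulVec_eq_zero_iff, Submodule.ne_bot_iff]
  constructor
  · rintro ⟨c, hc, hMc⟩
    have hMc' := (hmv c).mp hMc
    refine ⟨∑ k, c k • zVec n m Z k, Submodule.mem_inf.mpr ⟨?_, ?_⟩, ?_⟩
    · exact Submodule.sum_mem _ fun k _ => Submodule.smul_mem _ _
        (Submodule.subset_span ⟨k, rfl⟩)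
    · rw [Submodule.mem_orthogonal]
      intro u hu
      rw [planeOf, Submodule.mem_span_range_iff_exists_fun] at hu
      obtain ⟨d, rfl⟩ := hu
      simp only [sum_inner, inner_sum, inner_smul_left, inner_smul_right, inner_zVec_zVec,
        ← hM]
      calc ∑ k, c k * ∑ i, (starRingEnd ℂ) (d i) * M k i
          = ∑ i, (starRingEnd ℂ) (d i) * ∑ k, c k * M k i := by
            simp only [Finset.mul_sum]
            rw [Finset.sum_comm]
            exact Finset.sum_congr rfl fun i _ => Finset.sum_congr rfl fun k _ => by ring
        _ = 0 := by simp [hMc']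
    · intro h0
      obtain ⟨k, hk⟩ := Function.ne_iff.mp hc
      apply hk
      calc c k = (∑ l, c l • zVec n m Z l : EuclideanSpace ℂ (Fin (n+m))) (Fin.castAdd m k) := by
            rw [euclid_sum_apply]
            simp [euclid_smul_apply, zVec_apply_castAdd]
        _ = 0 := by rw [h0]; rfl
  · rintro ⟨v, hv, hv0⟩
    obtain ⟨hv1, hv2⟩ := Submodule.mem_inf.mp hv
    rw [planeOf, Submodule.mem_span_range_iff_exists_fun] at hv1
    obtain ⟨c, rfl⟩ := hv1
    refine ⟨c, ?_, (hmv c).mpr ?_⟩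
    · rintro rfl; simp at hv0
    · intro i
      have := (Submodule.mem_orthogonal _ _).mp hv2 (zVec n m Z' i)
        (Submodule.subset_span ⟨i, rfl⟩)
      simpa only [inner_sum, inner_smul_right, inner_zVec_zVec, ← hM] using this
end
end

section
/- Let 1 ≤ n ≤ m, let h_0, …, h_{n−1} be real numbers, and let H be the (n+m)×(n+m) complex matrix H = Σ_{i=0}^{n−1} h_i (E_{i,n+i} − E_{n+i,i}), where E_{ab} denotes the matrix unit. Let B ∈ ℂ^{n×m} be nonzero and let X_B be the (n+m)×(n+m) block matrix with zero diagonal blocks, upper-right block B and lower-left block −B^*. If c ∈ ℂ satisfies [H,[H,X_B]] = c · X_B (where [A,C] = AC − CA), then c is real and there exist indices p, q ∈ {0, …, n−1} such that c = −(h_p + h_q)², or c = −(h_p − h_q)², or n < m and c = −h_p². -/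
open scoped Matrix

noncomputable section

/-- The Cartan-subalgebra element `H = ∑ h_i (E_{i,n+i} − E_{n+i,i})` as an
`(n+m)×(n+m)` complex matrix. -/
def Hmat (n m : ℕ) (hnm : n ≤ m) (h : Fin n → ℝ) : Matrix (Fin (n + m)) (Fin (n + m)) ℂ :=
  ∑ i : Fin n, (h i : ℂ) •
    (Matrix.single (Fin.castAdd m i) (Fin.natAdd n (Fin.castLE hnm i)) 1 -
      Matrix.single (Fin.natAdd n (Fin.castLE hnm i)) (Fin.castAdd m i) 1)

/-- The tangent vector `X_B = [[0, B], [−B^*, 0]]` as an `(n+m)×(n+m)` complex matrix. -/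
def XB (n m : ℕ) (B : Matrix (Fin n) (Fin m) ℂ) : Matrix (Fin (n + m)) (Fin (n + m)) ℂ :=
  (Matrix.fromBlocks 0 B (-Bᴴ) 0).submatrix finSumFinEquiv.symm finSumFinEquiv.symm

/-- The commutator `[A, C] = AC − CA`. -/
def mBracket {N : ℕ} (A C : Matrix (Fin N) (Fin N) ℂ) : Matrix (Fin N) (Fin N) ℂ :=
  A * C - C * A

/-- A commutator for matrices over an arbitrary index type. -/
def mBr {I : Type*} [Fintype I] (A C : Matrix I I ℂ) : Matrix I I ℂ :=
  A * C - C * A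

/-- The upper-right block of `Hmat`. -/
def Dmat (n m : ℕ) (h : Fin n → ℝ) : Matrix (Fin n) (Fin m) ℂ :=
  Matrix.of fun i j => if (j : ℕ) = (i : ℕ) then (h i : ℂ) else 0

section auxLemmas

variable {n m k : ℕ} (hnm : n ≤ m) (h : Fin n → ℝ)

lemma Dmul (M : Matrix (Fin m) (Fin k) ℂ) (p : Fin n) (j : Fin k) :
    (Dmat n m h * M) p j = (h p : ℂ) * M (Fin.castLE hnm p) j := by
  rw [Matrix.mul_apply, Finset.sum_eq_single (Fin.castLE hnm p)]
  · simp [Dmat]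
  · intro b _ hb
    have : (b : ℕ) ≠ (p : ℕ) := fun hbp => hb (by ext; simp [hbp])
    simp [Dmat, this]
  · simp

lemma mulDT (M : Matrix (Fin k) (Fin m) ℂ) (i : Fin k) (q : Fin n) :
    (M * (Dmat n m h)ᵀ) i q = M i (Fin.castLE hnm q) * (h q : ℂ) := by
  rw [Matrix.mul_apply, Finset.sum_eq_single (Fin.castLE hnm q)]
  · simp [Dmat]
  · intro b _ hb
    have : (b : ℕ) ≠ (q : ℕ) := fun hbp => hb (by ext; simp [hbp])
    simp [Dmat, Matrix.transpose_apply, this]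
  · simp

lemma DTmul (M : Matrix (Fin n) (Fin k) ℂ) (q : Fin n) (j : Fin k) :
    ((Dmat n m h)ᵀ * M) (Fin.castLE hnm q) j = (h q : ℂ) * M q j := by
  rw [Matrix.mul_apply, Finset.sum_eq_single q]
  · simp [Dmat]
  · intro b _ hb
    have : (q : ℕ) ≠ (b : ℕ) := fun hbp => hb (by ext; simp [hbp.symm])
    simp [Dmat, Matrix.transpose_apply, this]
  · simp

lemma DTmul_zero (M : Matrix (Fin n) (Fin k) ℂ) (j : Fin m) (hj : n ≤ (j : ℕ)) (j' : Fin k) :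
    ((Dmat n m h)ᵀ * M) j j' = 0 := by
  rw [Matrix.mul_apply]
  apply Finset.sum_eq_zero
  intro b _
  have : (j : ℕ) ≠ (b : ℕ) := by have := b.isLt; omega
  simp [Dmat, Matrix.transpose_apply, this]

lemma mulD (M : Matrix (Fin k) (Fin n) ℂ) (i : Fin k) (q : Fin n) :
    (M * Dmat n m h) i (Fin.castLE hnm q) = M i q * (h q : ℂ) := by
  rw [Matrix.mul_apply, Finset.sum_eq_single q]
  · simp [Dmat]
  · intro b _ hb
    have : (q : ℕ) ≠ (b : ℕ) := fun hbp => hb (by ext; simp [hbp.symm])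
    simp [Dmat, this]
  · simp

lemma mulD_zero (M : Matrix (Fin k) (Fin n) ℂ) (i : Fin k) (j : Fin m) (hj : n ≤ (j : ℕ)) :
    (M * Dmat n m h) i j = 0 := by
  rw [Matrix.mul_apply]
  apply Finset.sum_eq_zero
  intro b _
  have : (j : ℕ) ≠ (b : ℕ) := by have := b.isLt; omega
  simp [Dmat, this]

lemma hFmat (hnm : n ≤ m) (h : Fin n → ℝ) :
    Hmat n m hnm h = (Matrix.fromBlocks 0 (Dmat n m h) (-(Dmat n m h)ᵀ) 0).submatrix
      finSumFinEquiv.symm finSumFinEquiv.symm := by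
  apply Matrix.ext
  intro a b
  obtain ⟨x, rfl⟩ : ∃ x, finSumFinEquiv x = a := ⟨finSumFinEquiv.symm a, by simp⟩
  obtain ⟨y, rfl⟩ : ∃ y, finSumFinEquiv y = b := ⟨finSumFinEquiv.symm b, by simp⟩
  rw [Matrix.submatrix_apply, Equiv.symm_apply_apply, Equiv.symm_apply_apply]
  rcases x with p | j <;> rcases y with p' | j' <;>
    simp only [Hmat, finSumFinEquiv_apply_left, finSumFinEquiv_apply_right,
      Matrix.sum_apply, Matrix.smul_apply, Matrix.sub_apply,
      Matrix.single, Matrix.of_apply, Matrix.fromBlocks_apply₁₁,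
      Matrix.fromBlocks_apply₁₂, Matrix.fromBlocks_apply₂₁, Matrix.fromBlocks_apply₂₂,
      Matrix.zero_apply, Matrix.neg_apply, Matrix.transpose_apply, Dmat, smul_eq_mul]
  · apply Finset.sum_eq_zero
    intro i _
    have h1 : ¬(Fin.castAdd m i = Fin.castAdd m p ∧
        Fin.natAdd n (Fin.castLE hnm i) = Fin.castAdd m p') := by
      rintro ⟨-, h2⟩
      have := congrArg Fin.val h2
      simp at this
      have := p'.isLt; omega
    have h2 : ¬(Fin.natAdd n (Fin.castLE hnm i) = Fin.castAdd m p ∧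
        Fin.castAdd m i = Fin.castAdd m p') := by
      rintro ⟨h2, -⟩
      have := congrArg Fin.val h2
      simp at this
      have := p.isLt; omega
    rw [if_neg h1, if_neg h2]
    ring
  · rw [Finset.sum_eq_single p]
    · have h2 : ¬(Fin.natAdd n (Fin.castLE hnm p) = Fin.castAdd m p ∧
          Fin.castAdd m p = Fin.natAdd n j') := by
        rintro ⟨h2, -⟩
        have := congrArg Fin.val h2
        simp at this
        have := p.isLt; omega
      rw [if_neg h2]
      by_cases hj : (j' : ℕ) = (p : ℕ)
      · have : Fin.natAdd n (Fin.castLE hnm p) = Fin.natAdd n j' := by ext; simp [hj]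
        rw [if_pos ⟨rfl, this⟩, if_pos hj]; ring
      · have : ¬(Fin.castAdd m p = Fin.castAdd m p ∧
            Fin.natAdd n (Fin.castLE hnm p) = Fin.natAdd n j') := by
          rintro ⟨-, h2⟩
          have := congrArg Fin.val h2
          simp at this
          exact hj this.symm
        rw [if_neg this, if_neg hj]; ring
    · intro i _ hi
      have h1 : ¬(Fin.castAdd m i = Fin.castAdd m p ∧
          Fin.natAdd n (Fin.castLE hnm i) = Fin.natAdd n j') := by
        rintro ⟨h2, -⟩
        exact hi (by ext; simpa using congrArg Fin.val h2)
      have h2 : ¬(Fin.natAdd n (Fin.castLE hnm i) = Fin.castAdd m p ∧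
          Fin.castAdd m i = Fin.natAdd n j') := by
        rintro ⟨h2, -⟩
        have := congrArg Fin.val h2
        simp at this
        have := p.isLt; omega
      rw [if_neg h1, if_neg h2]; ring
    · simp
  · rw [Finset.sum_eq_single p']
    · have h2 : ¬(Fin.castAdd m p' = Fin.natAdd n j ∧
          Fin.natAdd n (Fin.castLE hnm p') = Fin.castAdd m p') := by
        rintro ⟨h2, -⟩
        have := congrArg Fin.val h2
        simp at this
        have := p'.isLt; omega
      rw [if_neg h2]
      by_cases hj : (j : ℕ) = (p' : ℕ)
      · have : Fin.natAdd n (Fin.castLE hnm p') = Fin.natAdd n j := by ext; simp [hj]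
        rw [if_pos ⟨this, rfl⟩, if_pos hj]; ring
      · have : ¬(Fin.natAdd n (Fin.castLE hnm p') = Fin.natAdd n j ∧
            Fin.castAdd m p' = Fin.castAdd m p') := by
          rintro ⟨h2, -⟩
          have := congrArg Fin.val h2
          simp at this
          exact hj this.symm
        rw [if_neg this, if_neg hj]; ring
    · intro i _ hi
      have h1 : ¬(Fin.castAdd m i = Fin.natAdd n j ∧
          Fin.natAdd n (Fin.castLE hnm i) = Fin.castAdd m p') := by
        rintro ⟨-, h2⟩
        have := congrArg Fin.val h2
        simp at this
        have := p'.isLt; omega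
      have h2 : ¬(Fin.natAdd n (Fin.castLE hnm i) = Fin.natAdd n j ∧
          Fin.castAdd m i = Fin.castAdd m p') := by
        rintro ⟨-, h2⟩
        exact hi (by ext; simpa using congrArg Fin.val h2)
      rw [if_neg h1, if_neg h2]; ring
    · simp
  · apply Finset.sum_eq_zero
    intro i _
    have h1 : ¬(Fin.castAdd m i = Fin.natAdd n j ∧
        Fin.natAdd n (Fin.castLE hnm i) = Fin.natAdd n j') := by
      rintro ⟨h2, -⟩
      have := congrArg Fin.val h2
      simp at this
      have := i.isLt; omega
    have h2 : ¬(Fin.natAdd n (Fin.castLE hnm i) = Fin.natAdd n j ∧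
        Fin.castAdd m i = Fin.natAdd n j') := by
      rintro ⟨-, h2⟩
      have := congrArg Fin.val h2
      simp at this
      have := i.isLt; omega
    rw [if_neg h1, if_neg h2]
    ring

end auxLemmas

/-- Eigenvalues of `(ad H)²` on `𝔪`: if `[H,[H,X_B]] = c • X_B` with `B ≠ 0`, then `c`
is real and `c = −(h_p+h_q)²`, `c = −(h_p−h_q)²`, or (when `n < m`) `c = −h_p²` for some
indices `p, q`. -/
theorem adH_sq_eigenvalues
    (n m : ℕ) (hn : 1 ≤ n) (hnm : n ≤ m) (h : Fin n → ℝ)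
    (B : Matrix (Fin n) (Fin m) ℂ) (hB : B ≠ 0) (c : ℂ)
    (hc : mBracket (Hmat n m hnm h) (mBracket (Hmat n m hnm h) (XB n m B)) = c • XB n m B) :
    c.im = 0 ∧ ∃ p q : Fin n,
      c = -(((h p : ℂ) + (h q : ℂ)) ^ 2) ∨
      c = -(((h p : ℂ) - (h q : ℂ)) ^ 2) ∨
      (n < m ∧ c = -((h p : ℂ) ^ 2)) := by
  classical
  have hF : Hmat n m hnm h =
      (Matrix.fromBlocks 0 (Dmat n m h) (-(Dmat n m h)ᵀ) 0).submatrix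
        finSumFinEquiv.symm finSumFinEquiv.symm := hFmat hnm h
  have hX : XB n m B = (Matrix.fromBlocks 0 B (-Bᴴ) 0).submatrix
      finSumFinEquiv.symm finSumFinEquiv.symm := rfl
  have hkey : mBr (Matrix.fromBlocks 0 (Dmat n m h) (-(Dmat n m h)ᵀ) 0)
      (mBr (Matrix.fromBlocks 0 (Dmat n m h) (-(Dmat n m h)ᵀ) 0)
        (Matrix.fromBlocks 0 B (-Bᴴ) 0))
      = c • Matrix.fromBlocks 0 B (-Bᴴ) 0 := by
    have h2 : mBracket (Hmat n m hnm h) (mBracket (Hmat n m hnm h) (XB n m B)) =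
        (mBr (Matrix.fromBlocks 0 (Dmat n m h) (-(Dmat n m h)ᵀ) 0)
          (mBr (Matrix.fromBlocks 0 (Dmat n m h) (-(Dmat n m h)ᵀ) 0)
            (Matrix.fromBlocks 0 B (-Bᴴ) 0))).submatrix
          finSumFinEquiv.symm finSumFinEquiv.symm := by
      rw [hF, hX]
      unfold mBracket mBr
      simp [Matrix.submatrix_mul_equiv, Matrix.submatrix_sub, Matrix.mul_sub, Matrix.sub_mul]
    rw [h2] at hc
    apply Matrix.ext
    intro x y
    have := congrFun (congrFun hc (finSumFinEquiv x)) (finSumFinEquiv y)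
    simpa [XB, Matrix.smul_apply, Matrix.submatrix_apply] using this
  -- block structure of the double bracket
  have hbr1 : mBr (Matrix.fromBlocks 0 (Dmat n m h) (-(Dmat n m h)ᵀ) 0)
      (Matrix.fromBlocks 0 B (-Bᴴ) 0)
      = Matrix.fromBlocks (B * (Dmat n m h)ᵀ - Dmat n m h * Bᴴ) 0 0
          (Bᴴ * Dmat n m h - (Dmat n m h)ᵀ * B) := by
    unfold mBr
    rw [Matrix.fromBlocks_multiply, Matrix.fromBlocks_multiply]
    ext (i | i) (j | j) <;>
      simp [Matrix.mul_neg, Matrix.neg_mul, Matrix.sub_apply, sub_eq_add_neg] <;>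
      ring
  have hbr2 : mBr (Matrix.fromBlocks 0 (Dmat n m h) (-(Dmat n m h)ᵀ) 0)
      (mBr (Matrix.fromBlocks 0 (Dmat n m h) (-(Dmat n m h)ᵀ) 0)
        (Matrix.fromBlocks 0 B (-Bᴴ) 0))
      = Matrix.fromBlocks 0
          (Dmat n m h * (Bᴴ * Dmat n m h - (Dmat n m h)ᵀ * B) -
            (B * (Dmat n m h)ᵀ - Dmat n m h * Bᴴ) * Dmat n m h)
          ((Bᴴ * Dmat n m h - (Dmat n m h)ᵀ * B) * (Dmat n m h)ᵀ -
            (Dmat n m h)ᵀ * (B * (Dmat n m h)ᵀ - Dmat n m h * Bᴴ)) 0 := by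
    rw [show mBr (Matrix.fromBlocks 0 (Dmat n m h) (-(Dmat n m h)ᵀ) 0)
      (mBr (Matrix.fromBlocks 0 (Dmat n m h) (-(Dmat n m h)ᵀ) 0)
        (Matrix.fromBlocks 0 B (-Bᴴ) 0))
      = mBr (Matrix.fromBlocks 0 (Dmat n m h) (-(Dmat n m h)ᵀ) 0)
        (Matrix.fromBlocks (B * (Dmat n m h)ᵀ - Dmat n m h * Bᴴ) 0 0
          (Bᴴ * Dmat n m h - (Dmat n m h)ᵀ * B)) from by rw [hbr1]]
    unfold mBr
    rw [Matrix.fromBlocks_multiply, Matrix.fromBlocks_multiply]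
    ext (i | i) (j | j) <;>
      simp [Matrix.mul_neg, Matrix.neg_mul, Matrix.sub_apply, sub_eq_add_neg] <;>
      ring
  rw [hbr2] at hkey
  -- entrywise equations
  have hUR : ∀ (p : Fin n) (j : Fin m),
      (Dmat n m h * (Bᴴ * Dmat n m h - (Dmat n m h)ᵀ * B)) p j -
        ((B * (Dmat n m h)ᵀ - Dmat n m h * Bᴴ) * Dmat n m h) p j = c * B p j := by
    intro p j
    have := congrFun (congrFun hkey (Sum.inl p)) (Sum.inr j)
    simpa [Matrix.sub_apply] using this
  have hLL : ∀ (j : Fin m) (p : Fin n),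
      ((Bᴴ * Dmat n m h - (Dmat n m h)ᵀ * B) * (Dmat n m h)ᵀ) j p -
        ((Dmat n m h)ᵀ * (B * (Dmat n m h)ᵀ - Dmat n m h * Bᴴ)) j p
      = -(c * (starRingEnd ℂ) (B p j)) := by
    intro j p
    have := congrFun (congrFun hkey (Sum.inr j)) (Sum.inl p)
    simpa [Matrix.sub_apply, Matrix.conjTranspose_apply] using this
  -- get a nonzero entry
  obtain ⟨p, j, hu⟩ : ∃ p j, B p j ≠ 0 := by
    by_contra h'
    push_neg at h'
    exact hB (by ext i j; simpa using h' i j)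
  by_cases hj : (j : ℕ) < n
  · obtain ⟨q, rfl⟩ : ∃ q : Fin n, j = Fin.castLE hnm q := ⟨⟨(j : ℕ), hj⟩, by ext; simp⟩
    -- abbreviations
    set s : ℂ := (h p : ℂ) with hs
    set t : ℂ := (h q : ℂ) with ht
    set u : ℂ := B p (Fin.castLE hnm q) with hu'
    set v : ℂ := B q (Fin.castLE hnm p) with hv
    -- Eq1 : UR at (p, castLE q)
    have eq1 : s * ((starRingEnd ℂ) v * t - s * u) - (u * t - s * (starRingEnd ℂ) v) * t
        = c * u := by
      have e := hUR p (Fin.castLE hnm q)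
      rw [Dmul hnm h _ p, mulD hnm h _ p q, Matrix.sub_apply, Matrix.sub_apply,
        mulD hnm h Bᴴ (Fin.castLE hnm p) q, DTmul hnm h B p (Fin.castLE hnm q),
        mulDT hnm h B p q, Dmul hnm h Bᴴ p q,
        Matrix.conjTranspose_apply] at e
      exact e
    -- Eq2 : UR at (q, castLE p)
    have eq2 : t * ((starRingEnd ℂ) u * s - t * v) - (v * s - t * (starRingEnd ℂ) u) * s
        = c * v := by
      have e := hUR q (Fin.castLE hnm p)
      rw [Dmul hnm h _ q, mulD hnm h _ q p, Matrix.sub_apply, Matrix.sub_apply,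
        mulD hnm h Bᴴ (Fin.castLE hnm q) p, DTmul hnm h B q (Fin.castLE hnm p),
        mulDT hnm h B q p, Dmul hnm h Bᴴ q p,
        Matrix.conjTranspose_apply] at e
      exact e
    -- Eq3 : LL at (castLE q, p)
    have eq3 : ((starRingEnd ℂ) u * s - t * v) * s - t * (v * s - t * (starRingEnd ℂ) u)
        = -(c * (starRingEnd ℂ) u) := by
      have e := hLL (Fin.castLE hnm q) p
      rw [mulDT hnm h _ (Fin.castLE hnm q) p, DTmul hnm h _ q p, Matrix.sub_apply,
        Matrix.sub_apply, mulD hnm h Bᴴ (Fin.castLE hnm q) p,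
        DTmul hnm h B q (Fin.castLE hnm p),
        mulDT hnm h B q p, Dmul hnm h Bᴴ q p,
        Matrix.conjTranspose_apply] at e
      exact e
    -- conjugate of eq3
    have eq3' : (u * s - t * (starRingEnd ℂ) v) * s - t * ((starRingEnd ℂ) v * s - t * u)
        = -((starRingEnd ℂ) c * u) := by
      have := congrArg (starRingEnd ℂ) eq3
      simpa [map_mul, map_sub, map_neg, Complex.conj_conj, hs, ht,
        Complex.conj_ofReal] using this
    -- c is real
    have hcreal : c = (starRingEnd ℂ) c := by
      have hmul : c * u = (starRingEnd ℂ) c * u := by linear_combination -eq1 - eq3'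
      exact mul_right_cancel₀ hu hmul
    have him : c.im = 0 := by
      have := Complex.conj_eq_iff_im.mp hcreal.symm
      exact this
    refine ⟨him, p, q, ?_⟩
    -- a := c + s² + t²
    have hA : (c + s ^ 2 + t ^ 2) * u = 2 * s * t * (starRingEnd ℂ) v := by
      linear_combination -eq1
    have hA2 : (c + s ^ 2 + t ^ 2) * v = 2 * s * t * (starRingEnd ℂ) u := by
      linear_combination -eq2
    have hA2' : (c + s ^ 2 + t ^ 2) * (starRingEnd ℂ) v = 2 * s * t * u := by
      have := congrArg (starRingEnd ℂ) hA2
      simp only [map_mul, map_add, map_pow, Complex.conj_conj, hs, ht,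
        Complex.conj_ofReal, map_ofNat] at this
      rw [← hcreal] at this
      exact this
    have hzero : ((c + s ^ 2 + t ^ 2) - 2 * s * t) * ((c + s ^ 2 + t ^ 2) + 2 * s * t) * u
        = 0 := by
      linear_combination (c + s ^ 2 + t ^ 2) * hA + (2 * s * t) * hA2'
    rcases mul_eq_zero.mp hzero with hfac | hu0
    · rcases mul_eq_zero.mp hfac with h1 | h2
      · right; left
        linear_combination h1
      · left
        linear_combination h2
    · exact absurd hu0 hu
  · -- second-block columns: c = -h_p²
    push_neg at hj
    have e := hUR p j
    rw [Dmul hnm h _ p, Matrix.sub_apply,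
      mulD_zero h Bᴴ (Fin.castLE hnm p) j hj,
      DTmul hnm h B p j,
      mulD_zero h _ p j hj] at e
    have hc' : c = -((h p : ℂ) ^ 2) := by
      have hz : (c + (h p : ℂ) ^ 2) * B p j = 0 := by linear_combination -e
      rcases mul_eq_zero.mp hz with h1 | h2
      · linear_combination h1
      · exact absurd h2 hu
    constructor
    · rw [hc', pow_two]
      simp [Complex.mul_im]
    · exact ⟨p, p, Or.inr (Or.inr ⟨lt_of_le_of_lt hj j.isLt, hc'⟩)⟩
end
end

section
/- Let 1 ≤ n ≤ m, let h_0, …, h_{n−1} be real numbers, and let H = Σ_{i=0}^{n−1} h_i (E_{i,n+i} − E_{n+i,i}) as an (n+m)×(n+m) complex matrix. Then: (a) for all p, q ∈ {0, …, n−1} there exists a nonzero B ∈ ℂ^{n×m} such that [H,[H,X_B]] = −(h_p + h_q)² · X_B; (b) for all p, q ∈ {0, …, n−1} there exists a nonzero B ∈ ℂ^{n×m} such that [H,[H,X_B]] = −(h_p − h_q)² · X_B; (c) if n < m, then for every p ∈ {0, …, n−1} there exists a nonzero B ∈ ℂ^{n×m} such that [H,[H,X_B]] = −h_p² · X_B.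 Here X_B denotes the block matrix [[0, B],[−B^*, 0]] and [A,C] = AC − CA. -/
open scoped Matrix

noncomputable section

/-! ### Auxiliary material for the proof -/

namespace AdHAux

open Matrix

lemma stdCT {k l : Type*} [DecidableEq k] [DecidableEq l] (i : k) (j : l) (c : ℂ) :
    (Matrix.single i j c)ᴴ = Matrix.single j i ((starRingEnd ℂ) c) := by
  ext a b
  simp [Matrix.conjTranspose_apply, Matrix.single, and_comm, apply_ite (starRingEnd ℂ)]

lemma std_mul_std {α β γ : Type*} [DecidableEq α] [DecidableEq β] [DecidableEq γ] [Fintype β]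
    (i : α) (j : β) (c : ℂ) (k : β) (l : γ) (d : ℂ) :
    Matrix.single i j c * Matrix.single k l d
      = if j = k then Matrix.single i l (c * d) else 0 := by
  ext a b
  simp only [Matrix.mul_apply, Matrix.single, Matrix.of_apply, ite_and, mul_ite, ite_mul,
    mul_zero, zero_mul]
  by_cases hjk : j = k <;> by_cases hia : i = a <;> by_cases hlb : l = b <;>
    simp [hjk, hia, hlb, Finset.sum_ite_eq, Finset.sum_ite_eq']

lemma submatrix_std {k l : ℕ} (e : Fin (k+l) ≃ (Fin k ⊕ Fin l)) (a b : Fin k ⊕ Fin l) (c : ℂ) :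
    (Matrix.single a b c).submatrix e e
      = Matrix.single (e.symm a) (e.symm b) c := by
  ext x y
  simp [Matrix.single, Equiv.symm_apply_eq]

lemma fromBlocks_std {k l : ℕ} (i : Fin k) (j : Fin l) (c c' : ℂ) :
    Matrix.fromBlocks 0 (Matrix.single i j c) (-(Matrix.single j i c')) 0
      = Matrix.single (Sum.inl i) (Sum.inr j) c
        - Matrix.single (Sum.inr j) (Sum.inl i) c' := by
  ext (x|x) (y|y) <;> simp [Matrix.single]

lemma myFromBlocks_sub {k l : ℕ}
    (A A' : Matrix (Fin k) (Fin k) ℂ) (B B' : Matrix (Fin k) (Fin l) ℂ)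
    (C C' : Matrix (Fin l) (Fin k) ℂ) (D D' : Matrix (Fin l) (Fin l) ℂ) :
    Matrix.fromBlocks A B C D - Matrix.fromBlocks A' B' C' D'
      = Matrix.fromBlocks (A - A') (B - B') (C - C') (D - D') := by
  ext (x|x) (y|y) <;> simp

variable {n m : ℕ}

lemma XB_std (i : Fin n) (j : Fin m) (c : ℂ) :
    XB n m (Matrix.single i j c)
      = Matrix.single (Fin.castAdd m i) (Fin.natAdd n j) c
        - Matrix.single (Fin.natAdd n j) (Fin.castAdd m i) ((starRingEnd ℂ) c) := by
  rw [XB, stdCT, fromBlocks_std]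
  simp [Matrix.submatrix_sub, Pi.sub_apply, submatrix_std]

lemma XB_add (B C : Matrix (Fin n) (Fin m) ℂ) :
    XB n m (B + C) = XB n m B + XB n m C := by
  simp only [XB]
  have : Matrix.fromBlocks 0 (B + C) (-(B + C)ᴴ) 0
      = Matrix.fromBlocks (0 : Matrix (Fin n) (Fin n) ℂ) B (-Bᴴ) 0
        + Matrix.fromBlocks 0 C (-Cᴴ) 0 := by
    ext (x|x) (y|y) <;> simp [Matrix.conjTranspose_add] <;> ring
  rw [this]
  simp [Matrix.submatrix_add, Pi.add_apply]

lemma XB_smul (c : ℂ) (hc : (starRingEnd ℂ) c = c) (B : Matrix (Fin n) (Fin m) ℂ) :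
    XB n m (c • B) = c • XB n m B := by
  simp only [XB]
  rw [Matrix.conjTranspose_smul, show star c = c from hc]
  have : Matrix.fromBlocks (0 : Matrix (Fin n) (Fin n) ℂ) (c • B) (-(c • Bᴴ)) 0
      = c • Matrix.fromBlocks (0 : Matrix (Fin n) (Fin n) ℂ) B (-Bᴴ) 0 := by
    rw [Matrix.fromBlocks_smul]
    simp
  rw [this]
  simp [Matrix.submatrix_smul, Pi.smul_apply]

/-- The diagonal-block matrix `D` of the Cartan element. -/
def Dmat (n m : ℕ) (hnm : n ≤ m) (h : Fin n → ℝ) : Matrix (Fin n) (Fin m) ℂ :=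
  ∑ i : Fin n, Matrix.single i (Fin.castLE hnm i) (h i : ℂ)

lemma Hmat_eq (hnm : n ≤ m) (h : Fin n → ℝ) :
    Hmat n m hnm h = XB n m (Dmat n m hnm h) := by
  have hz : XB n m (0 : Matrix (Fin n) (Fin m) ℂ) = 0 := by
    simp [XB]
  let f : Matrix (Fin n) (Fin m) ℂ →+ Matrix (Fin (n+m)) (Fin (n+m)) ℂ :=
    { toFun := XB n m, map_zero' := hz, map_add' := XB_add }
  have : XB n m (Dmat n m hnm h)
      = ∑ i : Fin n, XB n m (Matrix.single i (Fin.castLE hnm i) (h i : ℂ)) :=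
    map_sum f _ _
  rw [this, Hmat]
  refine Finset.sum_congr rfl fun i _ => ?_
  rw [XB_std, smul_sub, Matrix.smul_single, Matrix.smul_single]
  simp [Complex.conj_ofReal]

/-- The key bracket computation: `(ad X_D)² X_B = X_{2DB*D − DD*B − BD*D}`. -/
lemma bracket_formula (D B : Matrix (Fin n) (Fin m) ℂ) :
    mBracket (XB n m D) (mBracket (XB n m D) (XB n m B))
      = XB n m (D * Bᴴ * D + D * Bᴴ * D - D * Dᴴ * B - B * (Dᴴ * D)) := by
  have key : ∀ M N : Matrix (Fin n ⊕ Fin m) (Fin n ⊕ Fin m) ℂ,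
      mBracket (M.submatrix ⇑finSumFinEquiv.symm ⇑finSumFinEquiv.symm)
          (N.submatrix ⇑finSumFinEquiv.symm ⇑finSumFinEquiv.symm)
        = (M * N - N * M).submatrix ⇑finSumFinEquiv.symm ⇑finSumFinEquiv.symm := by
    intro M N
    rw [mBracket, Matrix.submatrix_mul_equiv, Matrix.submatrix_mul_equiv]
    rfl
  rw [XB, XB, key, key, XB]
  refine congrArg (fun M : Matrix (Fin n ⊕ Fin m) (Fin n ⊕ Fin m) ℂ =>
    M.submatrix ⇑finSumFinEquiv.symm ⇑finSumFinEquiv.symm) ?_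
  simp only [Matrix.fromBlocks_multiply, myFromBlocks_sub,
    Matrix.conjTranspose_add, Matrix.conjTranspose_sub, Matrix.conjTranspose_mul,
    Matrix.conjTranspose_conjTranspose]
  rw [Matrix.fromBlocks_inj]
  refine ⟨?_, ?_, ?_, ?_⟩
  all_goals simp only [Matrix.zero_mul, Matrix.mul_zero, add_zero, zero_add, neg_zero, sub_zero,
      zero_sub, sub_self, Matrix.neg_mul, Matrix.mul_neg, neg_neg, Matrix.mul_add,
      Matrix.add_mul, Matrix.mul_sub, Matrix.sub_mul, neg_add, Matrix.mul_assoc]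
  all_goals abel

section prodlemmas
variable (hnm : n ≤ m) (h : Fin n → ℝ)

lemma mulA {β : Type*} [DecidableEq β] [Fintype β] (q : Fin n) (b : β) (c : ℂ) :
    Dmat n m hnm h * Matrix.single (Fin.castLE hnm q) b c
      = Matrix.single q b ((h q : ℂ) * c) := by
  rw [Dmat, Matrix.sum_mul]
  simp [std_mul_std, Finset.sum_ite_eq, Finset.sum_ite_eq']

lemma mulA0 {β : Type*} [DecidableEq β] [Fintype β] (j : Fin m) (hj : n ≤ (j : ℕ)) (b : β)
    (c : ℂ) : Dmat n m hnm h * Matrix.single j b c = 0 := by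
  rw [Dmat, Matrix.sum_mul]
  refine Finset.sum_eq_zero fun i _ => ?_
  rw [std_mul_std, if_neg]
  intro e
  have : ((Fin.castLE hnm i : Fin m) : ℕ) = (j : ℕ) := by rw [e]
  simp at this
  omega

lemma mulB {α : Type*} [DecidableEq α] [Fintype α] (a : α) (q : Fin n) (c : ℂ) :
    Matrix.single a q c * AdHAux.Dmat n m hnm h
      = Matrix.single a (Fin.castLE hnm q) (c * (h q : ℂ)) := by
  rw [Dmat, Matrix.mul_sum]
  simp [std_mul_std, Finset.sum_ite_eq, Finset.sum_ite_eq']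

lemma Dct : (Dmat n m hnm h)ᴴ
    = ∑ i : Fin n, Matrix.single (Fin.castLE hnm i) i ((h i : ℂ)) := by
  rw [Dmat, Matrix.conjTranspose_sum]
  exact Finset.sum_congr rfl fun i _ => by rw [stdCT, Complex.conj_ofReal]

lemma DDt : Dmat n m hnm h * (Dmat n m hnm h)ᴴ
    = ∑ i : Fin n, Matrix.single i i ((h i : ℂ) ^ 2) := by
  rw [Dct, Matrix.mul_sum]
  refine Finset.sum_congr rfl fun i _ => ?_
  rw [mulA, sq]

lemma DtD : (Dmat n m hnm h)ᴴ * AdHAux.Dmat n m hnm h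
    = ∑ i : Fin n, Matrix.single (Fin.castLE hnm i) (Fin.castLE hnm i) ((h i : ℂ) ^ 2) := by
  rw [Dct, Matrix.sum_mul]
  refine Finset.sum_congr rfl fun i _ => ?_
  rw [mulB, sq]

lemma diagMul {β : Type*} [DecidableEq β] [Fintype β] (g : Fin n → ℂ) (p : Fin n) (b : β)
    (c : ℂ) :
    (∑ i : Fin n, Matrix.single i i (g i)) * Matrix.single p b c
      = Matrix.single p b (g p * c) := by
  rw [Matrix.sum_mul]
  simp [std_mul_std, Finset.sum_ite_eq, Finset.sum_ite_eq']

lemma mulDiag {α : Type*} [DecidableEq α] [Fintype α] (g : Fin n → ℂ) (a : α) (q : Fin n)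
    (c : ℂ) :
    Matrix.single a (Fin.castLE hnm q) c
        * (∑ i : Fin n, Matrix.single (Fin.castLE hnm i) (Fin.castLE hnm i) (g i))
      = Matrix.single a (Fin.castLE hnm q) (c * g q) := by
  rw [Matrix.mul_sum]
  simp [std_mul_std, Finset.sum_ite_eq, Finset.sum_ite_eq']

lemma mulDiag0 {α : Type*} [DecidableEq α] [Fintype α] (g : Fin n → ℂ) (a : α) (j : Fin m)
    (hj : n ≤ (j : ℕ)) (c : ℂ) :
    Matrix.single a j c
        * (∑ i : Fin n, Matrix.single (Fin.castLE hnm i) (Fin.castLE hnm i) (g i))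
      = 0 := by
  rw [Matrix.mul_sum]
  refine Finset.sum_eq_zero fun i _ => ?_
  rw [std_mul_std, if_neg]
  intro e
  have : (j : ℕ) = ((Fin.castLE hnm i : Fin m) : ℕ) := by rw [e]
  simp at this
  omega

/-- The core computation for eigenvectors supported on positions `(p, q̂)` and `(q, p̂)`. -/
lemma core (p q : Fin n) (c₁ c₂ : ℂ) :
    letI D := Dmat n m hnm h
    letI B := Matrix.single p (Fin.castLE hnm q) c₁
      + Matrix.single q (Fin.castLE hnm p) c₂
    D * Bᴴ * D + D * Bᴴ * D - D * Dᴴ * B - B * (Dᴴ * D)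
      = Matrix.single p (Fin.castLE hnm q)
          (2 * (h p : ℂ) * (h q : ℂ) * (starRingEnd ℂ) c₂
            - ((h p : ℂ) ^ 2 + (h q : ℂ) ^ 2) * c₁)
        + Matrix.single q (Fin.castLE hnm p)
          (2 * (h p : ℂ) * (h q : ℂ) * (starRingEnd ℂ) c₁
            - ((h p : ℂ) ^ 2 + (h q : ℂ) ^ 2) * c₂) := by
  set D := Dmat n m hnm h with hD
  set B := Matrix.single p (Fin.castLE hnm q) c₁
      + Matrix.single q (Fin.castLE hnm p) c₂ with hBdef
  have hB : Bᴴ = Matrix.single (Fin.castLE hnm q) p ((starRingEnd ℂ) c₁)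
      + Matrix.single (Fin.castLE hnm p) q ((starRingEnd ℂ) c₂) := by
    rw [hBdef, Matrix.conjTranspose_add, stdCT, stdCT]
  have h2 : D * Bᴴ * D
      = Matrix.single q (Fin.castLE hnm p) ((h q : ℂ) * (starRingEnd ℂ) c₁ * (h p : ℂ))
        + Matrix.single p (Fin.castLE hnm q)
            ((h p : ℂ) * (starRingEnd ℂ) c₂ * (h q : ℂ)) := by
    rw [hB, Matrix.mul_add, mulA, mulA, Matrix.add_mul, mulB, mulB]
  have h3 : D * Dᴴ * B
      = Matrix.single p (Fin.castLE hnm q) ((h p : ℂ) ^ 2 * c₁)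
        + Matrix.single q (Fin.castLE hnm p) ((h q : ℂ) ^ 2 * c₂) := by
    rw [hBdef, hD, DDt, Matrix.mul_add, diagMul, diagMul]
  have h4 : B * (Dᴴ * D)
      = Matrix.single p (Fin.castLE hnm q) (c₁ * (h q : ℂ) ^ 2)
        + Matrix.single q (Fin.castLE hnm p) (c₂ * (h p : ℂ) ^ 2) := by
    rw [hBdef, hD, DtD, Matrix.add_mul, mulDiag, mulDiag]
  rw [h2, h3, h4]
  have final : ∀ (a b c d e f : ℂ),
      (Matrix.single q (Fin.castLE hnm p) a + Matrix.single p (Fin.castLE hnm q) b)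
        + (Matrix.single q (Fin.castLE hnm p) a
            + Matrix.single p (Fin.castLE hnm q) b)
        - (Matrix.single p (Fin.castLE hnm q) c
            + Matrix.single q (Fin.castLE hnm p) d)
        - (Matrix.single p (Fin.castLE hnm q) e
            + Matrix.single q (Fin.castLE hnm p) f)
      = Matrix.single p (Fin.castLE hnm q) (b + b - c - e)
        + Matrix.single q (Fin.castLE hnm p) (a + a - d - f) := by
    intro a b c d e f
    ext x y
    simp only [Matrix.add_apply, Matrix.sub_apply, Matrix.single, Matrix.of_apply]
    split_ifs <;> ring
  rw [final]
  congr 1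
  · congr 1
    ring
  · congr 1
    ring

end prodlemmas

end AdHAux

/-- Each of the restricted-root eigenvalues of `(ad H)²` on `𝔪` actually occurs:
`−(h_p+h_q)²`, `−(h_p−h_q)²`, and (when `n < m`) `−h_p²`. -/
theorem adH_sq_eigenvalues_exist
    (n m : ℕ) (hn : 1 ≤ n) (hnm : n ≤ m) (h : Fin n → ℝ) :
    (∀ p q : Fin n, ∃ B : Matrix (Fin n) (Fin m) ℂ, B ≠ 0 ∧
        mBracket (Hmat n m hnm h) (mBracket (Hmat n m hnm h) (XB n m B)) =
          (-(((h p : ℂ) + (h q : ℂ)) ^ 2)) • XB n m B) ∧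
    (∀ p q : Fin n, ∃ B : Matrix (Fin n) (Fin m) ℂ, B ≠ 0 ∧
        mBracket (Hmat n m hnm h) (mBracket (Hmat n m hnm h) (XB n m B)) =
          (-(((h p : ℂ) - (h q : ℂ)) ^ 2)) • XB n m B) ∧
    (n < m → ∀ p : Fin n, ∃ B : Matrix (Fin n) (Fin m) ℂ, B ≠ 0 ∧
        mBracket (Hmat n m hnm h) (mBracket (Hmat n m hnm h) (XB n m B)) =
          (-((h p : ℂ) ^ 2)) • XB n m B) := by
  classical
  refine ⟨?_, ?_, ?_⟩
  · -- eigenvalue −(h_p + h_q)²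
    intro p q
    refine ⟨Matrix.single p (Fin.castLE hnm q) Complex.I
      + Matrix.single q (Fin.castLE hnm p) Complex.I, ?_, ?_⟩
    · intro h0
      have hval := congrFun (congrFun h0 p) (Fin.castLE hnm q)
      by_cases hpq : p = q
      · subst hpq
        simp [Matrix.single, Complex.ext_iff] at hval
      · simp [Matrix.single, hpq, Ne.symm hpq, Complex.ext_iff] at hval
    · rw [AdHAux.Hmat_eq hnm h, AdHAux.bracket_formula, AdHAux.core hnm h p q]
      have harg : Matrix.single p (Fin.castLE hnm q)
            (2 * (h p : ℂ) * (h q : ℂ) * (starRingEnd ℂ) Complex.I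
              - ((h p : ℂ) ^ 2 + (h q : ℂ) ^ 2) * Complex.I)
          + Matrix.single q (Fin.castLE hnm p)
            (2 * (h p : ℂ) * (h q : ℂ) * (starRingEnd ℂ) Complex.I
              - ((h p : ℂ) ^ 2 + (h q : ℂ) ^ 2) * Complex.I)
          = (-(((h p : ℂ) + (h q : ℂ)) ^ 2)) •
            (Matrix.single p (Fin.castLE hnm q) Complex.I
              + Matrix.single q (Fin.castLE hnm p) Complex.I) := by
        ext x y
        simp only [Matrix.add_apply, Matrix.smul_apply, Matrix.single,
          Matrix.of_apply, smul_eq_mul, Complex.conj_I]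
        split_ifs <;> ring
      rw [harg, AdHAux.XB_smul]
      simp [Complex.conj_ofReal]
  · -- eigenvalue −(h_p − h_q)²
    intro p q
    refine ⟨Matrix.single p (Fin.castLE hnm q) 1
      + Matrix.single q (Fin.castLE hnm p) 1, ?_, ?_⟩
    · intro h0
      have hval := congrFun (congrFun h0 p) (Fin.castLE hnm q)
      by_cases hpq : p = q
      · subst hpq
        simp [Matrix.single] at hval
      · simp [Matrix.single, hpq, Ne.symm hpq] at hval
    · rw [AdHAux.Hmat_eq hnm h, AdHAux.bracket_formula, AdHAux.core hnm h p q]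
      have harg : Matrix.single p (Fin.castLE hnm q)
            (2 * (h p : ℂ) * (h q : ℂ) * (starRingEnd ℂ) 1
              - ((h p : ℂ) ^ 2 + (h q : ℂ) ^ 2) * 1)
          + Matrix.single q (Fin.castLE hnm p)
            (2 * (h p : ℂ) * (h q : ℂ) * (starRingEnd ℂ) 1
              - ((h p : ℂ) ^ 2 + (h q : ℂ) ^ 2) * 1)
          = (-(((h p : ℂ) - (h q : ℂ)) ^ 2)) •
            (Matrix.single p (Fin.castLE hnm q) 1
              + Matrix.single q (Fin.castLE hnm p) 1) := by
        ext x y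
        simp only [Matrix.add_apply, Matrix.smul_apply, Matrix.single,
          Matrix.of_apply, smul_eq_mul, map_one]
        split_ifs <;> ring
      rw [harg, AdHAux.XB_smul]
      simp [Complex.conj_ofReal]
  · -- eigenvalue −h_p²  (needs n < m)
    intro hlt p
    set j0 : Fin m := ⟨n, hlt⟩ with hj0
    refine ⟨Matrix.single p j0 1, ?_, ?_⟩
    · intro h0
      have hval := congrFun (congrFun h0 p) j0
      simp [Matrix.single] at hval
    · rw [AdHAux.Hmat_eq hnm h, AdHAux.bracket_formula]
      have hj : n ≤ (j0 : ℕ) := le_of_eq rfl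
      have hB : (Matrix.single p j0 (1:ℂ))ᴴ = Matrix.single j0 p 1 := by
        rw [AdHAux.stdCT, map_one]
      rw [hB]
      rw [AdHAux.mulA0 hnm h j0 hj p (1:ℂ)]
      rw [AdHAux.DDt hnm h, AdHAux.diagMul, AdHAux.DtD hnm h,
        AdHAux.mulDiag0 hnm _ p j0 hj]
      have harg : (0 : Matrix (Fin n) (Fin n) ℂ) * AdHAux.Dmat n m hnm h
            + (0 : Matrix (Fin n) (Fin n) ℂ) * AdHAux.Dmat n m hnm h
            - Matrix.single p j0 ((h p : ℂ) ^ 2 * 1) - 0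
          = (-((h p : ℂ) ^ 2)) • Matrix.single p j0 1 := by
        ext x y
        simp only [Matrix.add_apply, Matrix.sub_apply, Matrix.smul_apply, Matrix.zero_mul,
          Matrix.zero_apply, Matrix.single, Matrix.of_apply, smul_eq_mul]
        split_ifs <;> ring
      rw [harg, AdHAux.XB_smul]
      simp [Complex.conj_ofReal]
end
end

section
/- Let n, m ≥ 1 and B ∈ ℂ^{n×m}, and let ξ be the (n+m)×(n+m) complex block matrix ξ = [[0, B],[−B^*, 0]], where * denotes conjugate transpose. Then the matrix exponential of ξ is the block matrix exp(ξ) = [[C₁, S·B],[−S'·B^*, C₂]], where C₁ = Σ_{k=0}^∞ ((−1)^k/(2k)!) (BB^*)^k, C₂ = Σ_{k=0}^∞ ((−1)^k/(2k)!) (B^*B)^k, S = Σ_{k=0}^∞ ((−1)^k/(2k+1)!) (BB^*)^k, and S' = Σ_{k=0}^∞ ((−1)^k/(2k+1)!) (B^*B)^k (all series converging absolutely in the matrix algebra). -/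
open scoped Matrix

noncomputable section

namespace ExpXBAux

open Matrix NormedSpace

/-- `exp` commutes with reindexing by an equivalence. -/
theorem exp_submatrix {p q : Type*} [Fintype p] [DecidableEq p] [Fintype q] [DecidableEq q]
    (e : p ≃ q) (A : Matrix p p ℂ) :
    exp (A.submatrix e.symm e.symm) = (exp A).submatrix e.symm e.symm := by
  rw [congrFun (exp_eq_tsum ℂ) (A.submatrix _ _), congrFun (exp_eq_tsum ℂ) A]
  have := (Matrix.reindexLinearEquiv ℂ ℂ e e).toContinuousLinearEquiv.map_tsum
    (L := SummationFilter.unconditional ℕ) (f := fun n : ℕ => ((n.factorial : ℂ))⁻¹ • A ^ n)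
  have hpow : ∀ z : ℕ, (A ^ z).submatrix e.symm e.symm = (A.submatrix e.symm e.symm) ^ z :=
    fun z => by simpa [Matrix.coe_reindexAlgEquiv] using map_pow (Matrix.reindexAlgEquiv ℂ ℂ e) A z
  simpa [Matrix.submatrix_smul, hpow] using this.symm

/-- HasSum through a continuous additive map. -/
theorem hasSum_fromBlocks {X p q p' q' : Type*}
    {f₁₁ : X → Matrix p p' ℂ} {f₁₂ : X → Matrix p q' ℂ}
    {f₂₁ : X → Matrix q p' ℂ} {f₂₂ : X → Matrix q q' ℂ}
    {a : Matrix p p' ℂ} {b : Matrix p q' ℂ} {c : Matrix q p' ℂ} {d : Matrix q q' ℂ}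
    (h₁₁ : HasSum f₁₁ a) (h₁₂ : HasSum f₁₂ b) (h₂₁ : HasSum f₂₁ c) (h₂₂ : HasSum f₂₂ d) :
    HasSum (fun x => Matrix.fromBlocks (f₁₁ x) (f₁₂ x) (f₂₁ x) (f₂₂ x))
      (Matrix.fromBlocks a b c d) := by
  let φ₁₁ : Matrix p p' ℂ →+ Matrix (p ⊕ q) (p' ⊕ q') ℂ :=
    AddMonoidHom.mk' (fun X => Matrix.fromBlocks X 0 0 0)
      (fun _ _ => by simp [Matrix.fromBlocks_add])
  let φ₁₂ : Matrix p q' ℂ →+ Matrix (p ⊕ q) (p' ⊕ q') ℂ :=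
    AddMonoidHom.mk' (fun X => Matrix.fromBlocks 0 X 0 0)
      (fun _ _ => by simp [Matrix.fromBlocks_add])
  let φ₂₁ : Matrix q p' ℂ →+ Matrix (p ⊕ q) (p' ⊕ q') ℂ :=
    AddMonoidHom.mk' (fun X => Matrix.fromBlocks 0 0 X 0)
      (fun _ _ => by simp [Matrix.fromBlocks_add])
  let φ₂₂ : Matrix q q' ℂ →+ Matrix (p ⊕ q) (p' ⊕ q') ℂ :=
    AddMonoidHom.mk' (fun X => Matrix.fromBlocks 0 0 0 X)
      (fun _ _ => by simp [Matrix.fromBlocks_add])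
  have c₁₁ : Continuous φ₁₁ :=
    Continuous.matrix_fromBlocks continuous_id continuous_const continuous_const continuous_const
  have c₁₂ : Continuous φ₁₂ :=
    Continuous.matrix_fromBlocks continuous_const continuous_id continuous_const continuous_const
  have c₂₁ : Continuous φ₂₁ :=
    Continuous.matrix_fromBlocks continuous_const continuous_const continuous_id continuous_const
  have c₂₂ : Continuous φ₂₂ :=
    Continuous.matrix_fromBlocks continuous_const continuous_const continuous_const continuous_id
  have := ((h₁₁.map φ₁₁ c₁₁).add (h₁₂.map φ₁₂ c₁₂)).add
    ((h₂₁.map φ₂₁ c₂₁).add (h₂₂.map φ₂₂ c₂₂))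
  convert this using 1
  · funext x
    simp [φ₁₁, φ₁₂, φ₂₁, φ₂₂, Matrix.fromBlocks_add]
  · simp [φ₁₁, φ₁₂, φ₂₁, φ₂₂, Matrix.fromBlocks_add]

/-- Summability of the block power series. -/
theorem summable_aux {p : Type*} [Fintype p] [DecidableEq p] (M : Matrix p p ℂ)
    (c : ℕ → ℕ) (hc : ∀ k, k ≤ c k) :
    Summable fun k : ℕ => ((-1) ^ k / ((c k).factorial : ℂ)) • M ^ k := by
  letI : SeminormedRing (Matrix p p ℂ) := Matrix.linftyOpSemiNormedRing
  letI : NormedRing (Matrix p p ℂ) := Matrix.linftyOpNormedRing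
  letI : NormedAlgebra ℂ (Matrix p p ℂ) := Matrix.linftyOpNormedAlgebra
  refine Summable.of_norm_bounded (NormedSpace.norm_expSeries_summable' (𝕂 := ℂ) M) ?_
  intro k
  rw [norm_smul, norm_smul]
  have h1 : ‖((-1 : ℂ) ^ k / ((c k).factorial : ℂ))‖ = ((c k).factorial : ℝ)⁻¹ := by
    simp [norm_div, norm_pow]
  have h2 : ‖(((k.factorial : ℂ))⁻¹ : ℂ)‖ = ((k.factorial : ℝ))⁻¹ := by
    simp [norm_inv]
  rw [h1, h2]
  refine mul_le_mul_of_nonneg_right ?_ (norm_nonneg _)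
  refine inv_anti₀ (by positivity) ?_
  exact_mod_cast Nat.factorial_le (hc k)

/-- Summability of the exponential power series, stated for the `Pi` topology. -/
theorem expSummable {p : Type*} [Fintype p] [DecidableEq p] (A : Matrix p p ℂ) :
    Summable fun k : ℕ => ((k.factorial : ℂ))⁻¹ • A ^ k := by
  letI : SeminormedRing (Matrix p p ℂ) := Matrix.linftyOpSemiNormedRing
  letI : NormedRing (Matrix p p ℂ) := Matrix.linftyOpNormedRing
  letI : NormedAlgebra ℂ (Matrix p p ℂ) := Matrix.linftyOpNormedAlgebra
  exact NormedSpace.expSeries_summable' (𝕂 := ℂ) A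

/-- `exp` as a `tsum`, stated for the `Pi` topology. -/
theorem exp_eq_tsum_matrix {p : Type*} [Fintype p] [DecidableEq p] (A : Matrix p p ℂ) :
    exp A = ∑' k : ℕ, ((k.factorial : ℂ))⁻¹ • A ^ k := by
  letI : SeminormedRing (Matrix p p ℂ) := Matrix.linftyOpSemiNormedRing
  letI : NormedRing (Matrix p p ℂ) := Matrix.linftyOpNormedRing
  letI : NormedAlgebra ℂ (Matrix p p ℂ) := Matrix.linftyOpNormedAlgebra
  exact congrFun (NormedSpace.exp_eq_tsum ℂ) A

variable {n m : ℕ} (B : Matrix (Fin n) (Fin m) ℂ)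

/-- Even powers of the block matrix. -/
theorem pow_even (k : ℕ) :
    (Matrix.fromBlocks (0 : Matrix (Fin n) (Fin n) ℂ) B (-Bᴴ) 0) ^ (2 * k) =
      Matrix.fromBlocks (((-1 : ℂ)) ^ k • (B * Bᴴ) ^ k) 0 0 (((-1 : ℂ)) ^ k • (Bᴴ * B) ^ k) := by
  induction k with
  | zero => simp
  | succ k ih =>
    have h2 : 2 * (k + 1) = 2 * k + 2 := by ring
    rw [h2, pow_add, ih, sq, Matrix.fromBlocks_multiply, Matrix.fromBlocks_multiply,
      Matrix.fromBlocks_inj]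
    refine ⟨?_, by simp, by simp, ?_⟩
    · simp [Matrix.smul_mul, Matrix.mul_smul, pow_succ, mul_assoc, smul_smul]
    · simp [Matrix.smul_mul, Matrix.mul_smul, pow_succ, mul_assoc, smul_smul]

/-- Odd powers of the block matrix. -/
theorem pow_odd (k : ℕ) :
    (Matrix.fromBlocks (0 : Matrix (Fin n) (Fin n) ℂ) B (-Bᴴ) 0) ^ (2 * k + 1) =
      Matrix.fromBlocks 0 (((-1 : ℂ)) ^ k • ((B * Bᴴ) ^ k * B))
        (-(((-1 : ℂ)) ^ k • ((Bᴴ * B) ^ k * Bᴴ))) 0 := by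
  rw [pow_succ, pow_even, Matrix.fromBlocks_multiply, Matrix.fromBlocks_inj]
  exact ⟨by simp, by simp [Matrix.smul_mul], by simp [Matrix.smul_mul, Matrix.mul_smul], by simp⟩

end ExpXBAux

set_option maxHeartbeats 1000000 in
open ExpXBAux Matrix NormedSpace in
/-- Eq. (3.1) of the paper: the matrix exponential of `ξ = [[0,B],[−B^*,0]]` is the block
matrix `[[cos√(BB^*), (sin√(BB^*)/√(BB^*))·B],[−(sin√(B^*B)/√(B^*B))·B^*, cos√(B^*B)]]`,
the entries being given by the everywhere-convergent power series in `BB^*` and `B^*B`. -/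
theorem exp_XB_eq_blocks
    (n m : ℕ) (hn : 1 ≤ n) (hm : 1 ≤ m) (B : Matrix (Fin n) (Fin m) ℂ) :
    NormedSpace.exp (XB n m B) =
      (Matrix.fromBlocks
        (∑' k : ℕ, ((-1) ^ k / ((2 * k).factorial : ℂ)) • (B * Bᴴ) ^ k)
        ((∑' k : ℕ, ((-1) ^ k / ((2 * k + 1).factorial : ℂ)) • (B * Bᴴ) ^ k) * B)
        (-((∑' k : ℕ, ((-1) ^ k / ((2 * k + 1).factorial : ℂ)) • (Bᴴ * B) ^ k) * Bᴴ))
        (∑' k : ℕ, ((-1) ^ k / ((2 * k).factorial : ℂ)) • (Bᴴ * B) ^ k)).submatrix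
        finSumFinEquiv.symm finSumFinEquiv.symm := by
  rw [XB, exp_submatrix]
  refine congrArg (fun M : Matrix (Fin n ⊕ Fin m) (Fin n ⊕ Fin m) ℂ =>
    M.submatrix ⇑finSumFinEquiv.symm ⇑finSumFinEquiv.symm) ?_
  set A : Matrix (Fin n ⊕ Fin m) (Fin n ⊕ Fin m) ℂ := Matrix.fromBlocks 0 B (-Bᴴ) 0 with hAdef
  -- summability of the four component series
  have hP := summable_aux (B * Bᴴ) (fun k => 2 * k) (fun k => by show k ≤ 2 * k; omega)
  have hQ := summable_aux (Bᴴ * B) (fun k => 2 * k) (fun k => by show k ≤ 2 * k; omega)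
  have hP' := summable_aux (B * Bᴴ) (fun k => 2 * k + 1) (fun k => by show k ≤ 2 * k + 1; omega)
  have hQ' := summable_aux (Bᴴ * B) (fun k => 2 * k + 1) (fun k => by show k ≤ 2 * k + 1; omega)
  -- the exponential series of A, split into even and odd parts
  have hf : Summable fun k : ℕ => ((k.factorial : ℂ))⁻¹ • A ^ k := expSummable A
  have he : Summable fun k : ℕ => (((2 * k).factorial : ℂ))⁻¹ • A ^ (2 * k) :=
    hf.comp_injective fun a b h => by omega
  have ho : Summable fun k : ℕ => (((2 * k + 1).factorial : ℂ))⁻¹ • A ^ (2 * k + 1) :=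
    hf.comp_injective fun a b h => by omega
  have hsplit := tsum_even_add_odd (f := fun k : ℕ => ((k.factorial : ℂ))⁻¹ • A ^ k) he ho
  have hexp : NormedSpace.exp A = ∑' k : ℕ, ((k.factorial : ℂ))⁻¹ • A ^ k :=
    exp_eq_tsum_matrix A
  rw [hexp, ← hsplit]
  -- rewrite the even terms in block form
  have heven_eq : ∀ k : ℕ, (((2 * k).factorial : ℂ))⁻¹ • A ^ (2 * k) =
      Matrix.fromBlocks (((-1) ^ k / ((2 * k).factorial : ℂ)) • (B * Bᴴ) ^ k) 0 0
        (((-1) ^ k / ((2 * k).factorial : ℂ)) • (Bᴴ * B) ^ k) := by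
    intro k
    rw [hAdef, pow_even, Matrix.fromBlocks_smul, smul_zero, smul_smul, smul_smul,
      div_eq_mul_inv, mul_comm]
    simp
  have hodd_eq : ∀ k : ℕ, (((2 * k + 1).factorial : ℂ))⁻¹ • A ^ (2 * k + 1) =
      Matrix.fromBlocks 0 ((((-1) ^ k / ((2 * k + 1).factorial : ℂ)) • (B * Bᴴ) ^ k) * B)
        (-((((-1) ^ k / ((2 * k + 1).factorial : ℂ)) • (Bᴴ * B) ^ k) * Bᴴ)) 0 := by
    intro k
    rw [hAdef, pow_odd, Matrix.fromBlocks_smul, smul_zero, smul_neg, smul_smul, smul_smul,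
      div_eq_mul_inv, mul_comm, Matrix.smul_mul, Matrix.smul_mul]
    simp
  -- even part
  have heven : (∑' k : ℕ, (((2 * k).factorial : ℂ))⁻¹ • A ^ (2 * k)) =
      Matrix.fromBlocks (∑' k : ℕ, ((-1) ^ k / ((2 * k).factorial : ℂ)) • (B * Bᴴ) ^ k) 0 0
        (∑' k : ℕ, ((-1) ^ k / ((2 * k).factorial : ℂ)) • (Bᴴ * B) ^ k) := by
    have h := hasSum_fromBlocks hP.hasSum (hasSum_zero (α := Matrix (Fin n) (Fin m) ℂ))
      (hasSum_zero (α := Matrix (Fin m) (Fin n) ℂ)) hQ.hasSum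
    rw [← h.tsum_eq]
    exact tsum_congr heven_eq
  -- odd part
  have hmulB : HasSum (fun k : ℕ => (((-1) ^ k / ((2 * k + 1).factorial : ℂ)) • (B * Bᴴ) ^ k) * B)
      ((∑' k : ℕ, ((-1) ^ k / ((2 * k + 1).factorial : ℂ)) • (B * Bᴴ) ^ k) * B) := by
    let ψ : Matrix (Fin n) (Fin n) ℂ →+ Matrix (Fin n) (Fin m) ℂ :=
      AddMonoidHom.mk' (fun X => X * B) (fun _ _ => Matrix.add_mul _ _ _)
    exact hP'.hasSum.map ψ ((continuous_id).matrix_mul continuous_const)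
  have hmulBconj :
      HasSum (fun k : ℕ => -((((-1) ^ k / ((2 * k + 1).factorial : ℂ)) • (Bᴴ * B) ^ k) * Bᴴ))
      (-((∑' k : ℕ, ((-1) ^ k / ((2 * k + 1).factorial : ℂ)) • (Bᴴ * B) ^ k) * Bᴴ)) := by
    let ψ : Matrix (Fin m) (Fin m) ℂ →+ Matrix (Fin m) (Fin n) ℂ :=
      AddMonoidHom.mk' (fun X => X * Bᴴ) (fun _ _ => Matrix.add_mul _ _ _)
    exact (hQ'.hasSum.map ψ ((continuous_id).matrix_mul continuous_const)).neg
  have hodd : (∑' k : ℕ, (((2 * k + 1).factorial : ℂ))⁻¹ • A ^ (2 * k + 1)) =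
      Matrix.fromBlocks 0
        ((∑' k : ℕ, ((-1) ^ k / ((2 * k + 1).factorial : ℂ)) • (B * Bᴴ) ^ k) * B)
        (-((∑' k : ℕ, ((-1) ^ k / ((2 * k + 1).factorial : ℂ)) • (Bᴴ * B) ^ k) * Bᴴ)) 0 := by
    have h := hasSum_fromBlocks (hasSum_zero (α := Matrix (Fin n) (Fin n) ℂ)) hmulB hmulBconj
      (hasSum_zero (α := Matrix (Fin m) (Fin m) ℂ))
    rw [← h.tsum_eq]
    exact tsum_congr hodd_eq
  rw [heven, hodd]
  simp [Matrix.fromBlocks_add]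
end
end
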